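/- arXiv:1410.5547 — 7 statements merged into one kernel-verified Lean document; each statement's English description precedes it below -/
import Mathlib

section
/- For a radially symmetric graph with w = u' and v = √(1+w²), the radial component f of the Willmore flux vector field satisfies v⁵ f = w'' + (w/r)' - (5w/(2(1+w²)))(w')² - (w³/(2r²))(3+w²). -/
open Real Set

/-- For a radially symmetric graph with `w = u'`, `v = √(1+w²)`,
`H = w'/v³ + w/(rv)`, the radial component `f = (1/v)[(1/v²)(vH)' - ½ H² w]` of the
Willmore flux vector field satisfies
`v⁵ f = w'' + (w/r)' - (5w/(2(1+w²)))(w')² - (w³/(2r²))(3+w²)`. -/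
theorem stmt_5 (ρ : ℝ) (u : ℝ → ℝ) (hu : ContDiffOn ℝ (⊤ : ℕ∞) u (Set.Ioo 0 ρ))
    (w v H f : ℝ → ℝ)
    (hw : w = deriv u)
    (hv : ∀ t, v t = Real.sqrt (1 + (w t) ^ 2))
    (hH : ∀ t, H t = deriv w t / (v t) ^ 3 + w t / (t * v t))
    (hf : ∀ t, f t = (1 / v t) *
      ((1 / (v t) ^ 2) * deriv (fun s => v s * H s) t - (1 / 2) * (H t) ^ 2 * w t))
    (r : ℝ) (hr : r ∈ Set.Ioo 0 ρ) :
    (v r) ^ 5 * f r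
      = deriv (deriv w) r + deriv (fun t => w t / t) r
        - 5 * w r / (2 * (1 + (w r) ^ 2)) * (deriv w r) ^ 2
        - (w r) ^ 3 / (2 * r ^ 2) * (3 + (w r) ^ 2) := by
  have hr0 : 0 < r := hr.1
  have hwC : ContDiffOn ℝ (⊤ : ℕ∞) w (Set.Ioo 0 ρ) := by
    rw [hw]; exact hu.deriv_of_isOpen isOpen_Ioo (by simp)
  have hwC2 : ContDiffOn ℝ (⊤ : ℕ∞) (deriv w) (Set.Ioo 0 ρ) :=
    hwC.deriv_of_isOpen isOpen_Ioo (by simp)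
  set a := w r with ha
  set b := deriv w r with hb
  set c := deriv (deriv w) r with hc
  have hdw : HasDerivAt w b r :=
    ((hwC.contDiffAt (isOpen_Ioo.mem_nhds hr)).differentiableAt (by simp)).hasDerivAt
  have hdw2 : HasDerivAt (deriv w) c r :=
    ((hwC2.contDiffAt (isOpen_Ioo.mem_nhds hr)).differentiableAt (by simp)).hasDerivAt
  -- basic facts about v
  have hvpos : ∀ t, 0 < v t := by
    intro t; rw [hv]; exact Real.sqrt_pos.2 (by positivity)
  have hvsq : ∀ t, (v t) ^ 2 = 1 + (w t) ^ 2 := by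
    intro t; rw [hv]; exact Real.sq_sqrt (by positivity)
  -- rewrite v*H
  have hVH : (fun s => v s * H s) = fun t => deriv w t / (1 + (w t) ^ 2) + w t / t := by
    funext t
    have h2 := hvsq t
    have h0 := (hvpos t).ne'
    rw [hH t, ← h2]
    rcases eq_or_ne t 0 with rfl | ht
    · simp only [zero_mul, div_zero, add_zero]
      field_simp
    · field_simp
  -- derivative of the second function
  have hD2 : HasDerivAt (fun t => w t / t) ((b * r - a * 1) / r ^ 2) r :=
    hdw.div (hasDerivAt_id r) hr0.ne'
  have hD2e : deriv (fun t => w t / t) r = (b * r - a * 1) / r ^ 2 := hD2.deriv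
  -- derivative of v*H
  have hden : HasDerivAt (fun t => 1 + (w t) ^ 2) (2 * a * b) r := by
    exact ((hasDerivAt_const r (1 : ℝ)).add (hdw.pow 2)).congr_deriv (by rw [ha]; simp)
  have hdenne : (1 : ℝ) + a ^ 2 ≠ 0 := by positivity
  have hD1 : HasDerivAt (fun t => deriv w t / (1 + (w t) ^ 2) + w t / t)
      ((c * (1 + a ^ 2) - b * (2 * a * b)) / (1 + a ^ 2) ^ 2 + (b * r - a * 1) / r ^ 2) r :=
    (hdw2.div hden hdenne).add hD2
  have hD1e : deriv (fun s => v s * H s) r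
      = (c * (1 + a ^ 2) - b * (2 * a * b)) / (1 + a ^ 2) ^ 2 + (b * r - a * 1) / r ^ 2 := by
    rw [hVH]; exact hD1.deriv
  -- final computation
  have h2 := hvsq r
  have h0 := (hvpos r).ne'
  have hK : deriv w r / (v r) ^ 3 + w r / (r * v r) = (b / (1 + a ^ 2) + a / r) / v r := by
    rw [← h2]
    field_simp
    ring
  have h5 : ∀ X : ℝ, v r ^ 5 * (1 / v r * X) = (1 + a ^ 2) ^ 2 * X := by
    intro X
    rw [← h2]
    field_simp
  rw [hf r, hD1e, hD2e, hH r, hK, div_pow, h2, h5]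
  field_simp
  ring
end

section
/- Let w₁, w₂ ∈ C¹([0,r₀]) with w₁(0) = w₂(0) = 0 and Λ = ‖w₁‖_{C¹} + ‖w₂‖_{C¹}. Set φ(w) = (5w/(2(1+w²)))(w')² + (w³/(2r²))(3+w²). Then there is a constant C depending only on Λ and r₀ such that |φ(w₁)(r) - φ(w₂)(r)| ≤ C(r|w₁'(r) - w₂'(r)| + |w₁(r) - w₂(r)|) for all r ∈ (0, r₀]. -/
open Real Set

lemma lip_h (a b : ℝ) : |a/(1+a^2) - b/(1+b^2)| ≤ |a-b| := by
  have ha : (0:ℝ) < 1 + a^2 := by positivity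
  have hb : (0:ℝ) < 1 + b^2 := by positivity
  have key : a/(1+a^2) - b/(1+b^2) = (a-b)*(1-a*b)/((1+a^2)*(1+b^2)) := by
    field_simp; ring
  rw [key, abs_div, abs_mul, abs_of_pos (mul_pos ha hb), div_le_iff₀ (mul_pos ha hb)]
  have h2 : |1 - a*b| ≤ (1+a^2)*(1+b^2) := by
    have h1 : |1 - a*b| ≤ 1 + |a| * |b| := by
      calc |1 - a*b| ≤ |(1:ℝ)| + |a*b| := abs_sub _ _
      _ = 1 + |a| * |b| := by rw [abs_one, abs_mul]
    nlinarith [sq_abs a, sq_abs b, sq_nonneg (|a| - |b|), abs_nonneg a, abs_nonneg b, sq_nonneg (a*b)]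
  exact mul_le_mul_of_nonneg_left h2 (abs_nonneg _)

lemma quint (M a b : ℝ) (ha : |a| ≤ M) (hb : |b| ≤ M) :
    |3*a^3+a^5 - (3*b^3+b^5)| ≤ (9*M^2+5*M^4)*|a-b| := by
  have key : 3*a^3+a^5 - (3*b^3+b^5)
      = (a-b)*(3*(a^2+a*b+b^2) + (a^4+a^3*b+a^2*b^2+a*b^3+b^4)) := by ring
  rw [key, abs_mul]
  have hM : 0 ≤ M := le_trans (abs_nonneg a) ha
  have ha2 : a^2 ≤ M^2 := by nlinarith [sq_abs a, abs_nonneg a]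
  have hb2 : b^2 ≤ M^2 := by nlinarith [sq_abs b, abs_nonneg b]
  have hP : |3*(a^2+a*b+b^2) + (a^4+a^3*b+a^2*b^2+a*b^3+b^4)| ≤ 9*M^2+5*M^4 := by
    rw [abs_le]
    constructor <;> nlinarith [sq_nonneg (a+b), sq_nonneg (a-b), sq_nonneg (a*b), sq_nonneg (a^2-b^2), sq_nonneg (a^2+b^2), mul_le_mul ha2 hb2 (sq_nonneg b) (sq_nonneg M), sq_nonneg (a^2 - a*b), sq_nonneg (a*b - b^2), sq_nonneg (a^2 + a*b), sq_nonneg (a*b + b^2)]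
  calc |a-b| * |3*(a^2+a*b+b^2) + (a^4+a^3*b+a^2*b^2+a*b^3+b^4)|
      ≤ |a-b| * (9*M^2+5*M^4) := mul_le_mul_of_nonneg_left hP (abs_nonneg _)
    _ = (9*M^2+5*M^4)*|a-b| := by ring


set_option maxHeartbeats 1000000 in
/-- Let `w₁, w₂ ∈ C¹([0,r₀])` with `w₁(0)=w₂(0)=0` and C¹-norms bounded
by `Λ`. With `φ(w) = (5w/(2(1+w²)))(w')² + (w³/(2r²))(3+w²)`, there is a constant `C`
depending only on `Λ` and `r₀` such that
`|φ(w₁)(r) - φ(w₂)(r)| ≤ C(r|w₁'(r)-w₂'(r)| + |w₁(r)-w₂(r)|)` on `(0,r₀]`. -/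
theorem stmt_9 (r₀ Λ : ℝ) (hr₀ : 0 < r₀) :
    ∃ C : ℝ, 0 < C ∧ ∀ w₁ w₂ w₁' w₂' : ℝ → ℝ,
      (∀ r ∈ Set.Icc 0 r₀, HasDerivWithinAt w₁ (w₁' r) (Set.Icc 0 r₀) r) →
      (∀ r ∈ Set.Icc 0 r₀, HasDerivWithinAt w₂ (w₂' r) (Set.Icc 0 r₀) r) →
      w₁ 0 = 0 → w₂ 0 = 0 →
      (∀ r ∈ Set.Icc 0 r₀, |w₁ r| + |w₁' r| + |w₂ r| + |w₂' r| ≤ Λ) →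
      ∀ r ∈ Set.Ioc 0 r₀,
        |(5 * w₁ r / (2 * (1 + (w₁ r) ^ 2)) * (w₁' r) ^ 2
            + (w₁ r) ^ 3 / (2 * r ^ 2) * (3 + (w₁ r) ^ 2))
          - (5 * w₂ r / (2 * (1 + (w₂ r) ^ 2)) * (w₂' r) ^ 2
            + (w₂ r) ^ 3 / (2 * r ^ 2) * (3 + (w₂ r) ^ 2))|
          ≤ C * (r * |w₁' r - w₂' r| + |w₁ r - w₂ r|) := by
  refine ⟨1 + 8*Λ^2 + 3*Λ^4*r₀^2, by positivity, ?_⟩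
  intro w₁ w₂ w₁' w₂' hd₁ hd₂ h₁0 h₂0 hΛ r hr
  obtain ⟨hrpos, hrle⟩ := hr
  have hrmem : r ∈ Set.Icc 0 r₀ := ⟨le_of_lt hrpos, hrle⟩
  have h0mem : (0:ℝ) ∈ Set.Icc 0 r₀ := ⟨le_refl 0, le_of_lt hr₀⟩
  have hΛ0 : 0 ≤ Λ := le_trans (by positivity) (hΛ 0 h0mem)
  -- pointwise bounds
  have hb := hΛ r hrmem
  have habs : ∀ x : ℝ, 0 ≤ |x| := fun x => abs_nonneg x
  set a := w₁ r with ha_def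
  set b := w₂ r with hb_def
  set p := w₁' r with hp_def
  set q := w₂' r with hq_def
  have haΛ : |a| ≤ Λ := by have := habs (w₁' r); have := habs (w₂ r); have := habs (w₂' r); linarith
  have hbΛ : |b| ≤ Λ := by have := habs (w₁ r); have := habs (w₁' r); have := habs (w₂' r); linarith
  have hpΛ : |p| ≤ Λ := by have := habs (w₁ r); have := habs (w₂ r); have := habs (w₂' r); linarith
  have hqΛ : |q| ≤ Λ := by have := habs (w₁ r); have := habs (w₂ r); have := habs (w₁ r); have := habs (w₁' r); linarith
  -- MVT bounds |a| ≤ Λ r, |b| ≤ Λ r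
  have hmvt₁ : |a| ≤ Λ * r := by
    have hd' : ∀ x ∈ Set.Icc 0 r₀, ‖w₁' x‖ ≤ Λ := by
      intro x hx
      have := hΛ x hx
      simp only [Real.norm_eq_abs]
      have := habs (w₁ x); have := habs (w₂ x); have := habs (w₂' x); linarith
    have := Convex.norm_image_sub_le_of_norm_hasDerivWithin_le hd₁ hd' (convex_Icc 0 r₀) h0mem hrmem
    simpa [h₁0, Real.norm_eq_abs, abs_of_pos hrpos] using this
  have hmvt₂ : |b| ≤ Λ * r := by
    have hd' : ∀ x ∈ Set.Icc 0 r₀, ‖w₂' x‖ ≤ Λ := by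
      intro x hx
      have := hΛ x hx
      simp only [Real.norm_eq_abs]
      have := habs (w₁ x); have := habs (w₂ x); have := habs (w₁' x); linarith
    have := Convex.norm_image_sub_le_of_norm_hasDerivWithin_le hd₂ hd' (convex_Icc 0 r₀) h0mem hrmem
    simpa [h₂0, Real.norm_eq_abs, abs_of_pos hrpos] using this
  have hapos : (0:ℝ) < 1 + a^2 := by positivity
  have hbpos : (0:ℝ) < 1 + b^2 := by positivity
  -- decomposition
  have hdecomp :
      (5 * a / (2 * (1 + a ^ 2)) * p ^ 2 + a ^ 3 / (2 * r ^ 2) * (3 + a ^ 2))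
        - (5 * b / (2 * (1 + b ^ 2)) * q ^ 2 + b ^ 3 / (2 * r ^ 2) * (3 + b ^ 2))
      = (5/2) * (a/(1+a^2) - b/(1+b^2)) * p^2
        + (5/2) * (b/(1+b^2)) * (p^2 - q^2)
        + (3*a^3+a^5 - (3*b^3+b^5)) / (2*r^2) := by
    field_simp
    ring
  rw [hdecomp]
  -- bound each term
  have hT1 : |(5/2) * (a/(1+a^2) - b/(1+b^2)) * p^2| ≤ (5/2) * Λ^2 * |a - b| := by
    rw [abs_mul, abs_mul, abs_of_pos (by norm_num : (0:ℝ) < 5/2)]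
    have h1 := lip_h a b
    have h2 : |p^2| ≤ Λ^2 := by
      rw [abs_pow]; exact pow_le_pow_left₀ (abs_nonneg p) hpΛ 2
    calc 5/2 * |a/(1+a^2) - b/(1+b^2)| * |p^2| ≤ 5/2 * |a-b| * Λ^2 := by
          apply mul_le_mul _ h2 (abs_nonneg _) (by positivity)
          exact mul_le_mul_of_nonneg_left h1 (by norm_num)
      _ = (5/2) * Λ^2 * |a - b| := by ring
  have hT2 : |(5/2) * (b/(1+b^2)) * (p^2 - q^2)| ≤ 5 * Λ^2 * (r * |p - q|) := by
    rw [abs_mul, abs_mul, abs_of_pos (by norm_num : (0:ℝ) < 5/2)]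
    have h1 : |b/(1+b^2)| ≤ Λ * r := by
      rw [abs_div, abs_of_pos hbpos]
      calc |b| / (1+b^2) ≤ |b| / 1 := by
            apply div_le_div_of_nonneg_left (abs_nonneg b) one_pos
            nlinarith [sq_nonneg b]
        _ = |b| := div_one _
        _ ≤ Λ * r := hmvt₂
    have h2 : |p^2 - q^2| ≤ 2*Λ * |p - q| := by
      have : p^2 - q^2 = (p+q)*(p-q) := by ring
      rw [this, abs_mul]
      apply mul_le_mul_of_nonneg_right _ (abs_nonneg _)
      calc |p+q| ≤ |p| + |q| := abs_add_le p q
        _ ≤ 2*Λ := by linarith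
    calc 5/2 * |b/(1+b^2)| * |p^2 - q^2| ≤ 5/2 * (Λ*r) * (2*Λ*|p-q|) := by
          apply mul_le_mul _ h2 (abs_nonneg _) (by positivity)
          exact mul_le_mul_of_nonneg_left h1 (by norm_num)
      _ = 5 * Λ^2 * (r * |p - q|) := by ring
  have hT3 : |(3*a^3+a^5 - (3*b^3+b^5)) / (2*r^2)| ≤ (9/2*Λ^2 + 5/2*Λ^4*r₀^2) * |a - b| := by
    rw [abs_div, abs_of_pos (by positivity : (0:ℝ) < 2*r^2)]
    rw [div_le_iff₀ (by positivity : (0:ℝ) < 2*r^2)]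
    have h1 := quint (Λ*r) a b hmvt₁ hmvt₂
    calc |3*a^3+a^5 - (3*b^3+b^5)| ≤ (9*(Λ*r)^2+5*(Λ*r)^4)*|a-b| := h1
      _ ≤ (9/2*Λ^2 + 5/2*Λ^4*r₀^2) * |a - b| * (2*r^2) := by
          have h2 : (9*(Λ*r)^2+5*(Λ*r)^4) ≤ (9/2*Λ^2 + 5/2*Λ^4*r₀^2) * (2*r^2) := by
            have hrr : r^2 ≤ r₀^2 := pow_le_pow_left₀ (le_of_lt hrpos) hrle 2
            have h4 : 0 ≤ Λ^4*r^2*(r₀^2 - r^2) :=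
              mul_nonneg (by positivity) (sub_nonneg.2 hrr)
            nlinarith [h4]
          calc (9*(Λ*r)^2+5*(Λ*r)^4)*|a-b| ≤ ((9/2*Λ^2 + 5/2*Λ^4*r₀^2) * (2*r^2)) * |a-b| :=
                mul_le_mul_of_nonneg_right h2 (abs_nonneg _)
            _ = (9/2*Λ^2 + 5/2*Λ^4*r₀^2) * |a - b| * (2*r^2) := by ring
  calc |(5/2) * (a/(1+a^2) - b/(1+b^2)) * p^2 + (5/2) * (b/(1+b^2)) * (p^2 - q^2)
        + (3*a^3+a^5 - (3*b^3+b^5)) / (2*r^2)|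
      ≤ |(5/2) * (a/(1+a^2) - b/(1+b^2)) * p^2 + (5/2) * (b/(1+b^2)) * (p^2 - q^2)|
        + |(3*a^3+a^5 - (3*b^3+b^5)) / (2*r^2)| := abs_add_le _ _
    _ ≤ |(5/2) * (a/(1+a^2) - b/(1+b^2)) * p^2| + |(5/2) * (b/(1+b^2)) * (p^2 - q^2)|
        + |(3*a^3+a^5 - (3*b^3+b^5)) / (2*r^2)| := by
          have := abs_add_le ((5/2) * (a/(1+a^2) - b/(1+b^2)) * p^2) ((5/2) * (b/(1+b^2)) * (p^2 - q^2))
          linarith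
    _ ≤ (1 + 8*Λ^2 + 3*Λ^4*r₀^2) * (r * |p - q| + |a - b|) := by
          have hr2 : 0 ≤ r * |p-q| := mul_nonneg (le_of_lt hrpos) (abs_nonneg _)
          nlinarith [hT1, hT2, hT3, abs_nonneg (a-b), sq_nonneg Λ, sq_nonneg (Λ^2), sq_nonneg r₀, mul_nonneg (mul_nonneg (mul_nonneg (sq_nonneg Λ) (sq_nonneg Λ)) (sq_nonneg r₀)) (abs_nonneg (a-b)), mul_nonneg (mul_nonneg (sq_nonneg Λ) (sq_nonneg Λ)) (sq_nonneg r₀), mul_nonneg (sq_nonneg Λ) hr2, mul_nonneg (mul_nonneg (mul_nonneg (sq_nonneg Λ) (sq_nonneg Λ)) (sq_nonneg r₀)) hr2, mul_nonneg (sq_nonneg Λ) (abs_nonneg (a-b))]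
end

section
/- There exists ε > 0 such that the ODE w'' + (w/r)' = (5w/(2(1+w²)))(w')² + (w³/(2r²))(3+w²) has at most one C² solution on [0,ε] with initial data w(0) = 0 and w'(0) = a. -/
open Real Set Filter Topology

/-!
The left-hand side of the equation is the derivative of `w / r + w'`. For two solutions put
`φ = w₁ - w₂`, `ψ = φ'` and `Q = φ / r + ψ`; then `Q'` is the difference of the right-hand
sides, which near `0` is at most `K (|φ| / r + |ψ|)` since solutions satisfy `|w| ≤ B r` and
`|w'| ≤ B`. If `M = max |ψ|` on `[0, δ]`, then `|φ| ≤ M r`, so `|Q'| ≤ 2 K M`, and `Q(0+) = 0`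
gives `|Q| ≤ 2 K M r`. Integrating `(r φ)' = r Q` gives `|φ| ≤ 2 K M r²`, hence
`|ψ| ≤ |Q| + |φ| / r ≤ 4 K M δ`, and `4 K δ < 1` forces `M = 0`.
-/

noncomputable def odeRhs (r w p : ℝ) : ℝ :=
  5 * w / (2 * (1 + w ^ 2)) * p ^ 2 + w ^ 3 / (2 * r ^ 2) * (3 + w ^ 2)

lemma abs_pow_three_mul_sub_le {x y c : ℝ} (hx : |x| ≤ c) (hy : |y| ≤ c) :
    |x ^ 3 * (3 + x ^ 2) - y ^ 3 * (3 + y ^ 2)| ≤ (9 * c ^ 2 + 5 * c ^ 4) * |x - y| := by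
  have hx2 : x ^ 2 ≤ c ^ 2 := sq_le_sq' (abs_le.1 hx).1 (abs_le.1 hx).2
  have hy2 : y ^ 2 ≤ c ^ 2 := sq_le_sq' (abs_le.1 hy).1 (abs_le.1 hy).2
  have hxy : x * y ≤ c ^ 2 := by nlinarith [sq_nonneg (x - y)]
  have hq₂ : 0 ≤ x ^ 2 + x * y + y ^ 2 := by nlinarith [sq_nonneg (x + y)]
  have hq₄ : 0 ≤ x ^ 4 + x ^ 3 * y + x ^ 2 * y ^ 2 + x * y ^ 3 + y ^ 4 := by
    nlinarith [sq_nonneg (x ^ 2 + x * y), sq_nonneg (y ^ 2 + x * y)]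
  have hb₄ : x ^ 4 + x ^ 3 * y + x ^ 2 * y ^ 2 + x * y ^ 3 + y ^ 4 ≤ 5 * c ^ 4 := by
    nlinarith [mul_le_mul hx2 hy2 (sq_nonneg y) (sq_nonneg c),
      mul_nonneg (sq_nonneg (x - y)) (add_nonneg (sq_nonneg x) (sq_nonneg y))]
  rw [show x ^ 3 * (3 + x ^ 2) - y ^ 3 * (3 + y ^ 2) = (x - y) * (3 * (x ^ 2 + x * y + y ^ 2)
      + (x ^ 4 + x ^ 3 * y + x ^ 2 * y ^ 2 + x * y ^ 3 + y ^ 4)) by ring,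
    abs_mul, mul_comm, abs_of_nonneg (by linarith)]
  exact mul_le_mul_of_nonneg_right (by linarith) (abs_nonneg _)

lemma abs_div_one_add_sq_sub_le (x y : ℝ) :
    |5 * x / (2 * (1 + x ^ 2)) - 5 * y / (2 * (1 + y ^ 2))| ≤ 5 / 2 * |x - y| := by
  have hx : 0 < 1 + x ^ 2 := by positivity
  have hy : 0 < 1 + y ^ 2 := by positivity
  have h : |(1 - x * y) / ((1 + x ^ 2) * (1 + y ^ 2))| ≤ 1 := by
    rw [abs_div, abs_of_pos (by positivity : (0:ℝ) < (1 + x ^ 2) * (1 + y ^ 2)),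
      div_le_one (by positivity), abs_le]
    constructor <;> nlinarith [sq_nonneg (x - y), sq_nonneg (x + y), sq_nonneg (x * y)]
  rw [show 5 * x / (2 * (1 + x ^ 2)) - 5 * y / (2 * (1 + y ^ 2))
      = 5 / 2 * (x - y) * ((1 - x * y) / ((1 + x ^ 2) * (1 + y ^ 2))) by field_simp; ring,
    abs_mul, abs_mul, abs_of_pos (by norm_num : (0:ℝ) < 5 / 2)]
  nlinarith [abs_nonneg (x - y)]

lemma abs_odeRhs_sub_le {B s x y p q : ℝ} (hs : 0 < s) (hs1 : s ≤ 1) (hx : |x| ≤ B * s)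
    (hy : |y| ≤ B * s) (hp : |p| ≤ B) (hq : |q| ≤ B) :
    |odeRhs s x p - odeRhs s y q| ≤ (7 * B ^ 2 + 3 * B ^ 4) * (|x - y| + |p - q|) := by
  have hB : 0 ≤ B := (abs_nonneg p).trans hp
  have hyB : |y| ≤ B := hy.trans (mul_le_of_le_one_right hB hs1)
  have hp2 : |p ^ 2| ≤ B ^ 2 := by rw [abs_pow]; exact pow_le_pow_left₀ (abs_nonneg p) hp 2
  have hpq : |p ^ 2 - q ^ 2| ≤ 2 * B * |p - q| := by
    rw [sq_sub_sq, abs_mul]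
    exact mul_le_mul_of_nonneg_right ((abs_add_le p q).trans (by linarith)) (abs_nonneg _)
  have hfrac : |5 * y / (2 * (1 + y ^ 2))| ≤ 5 / 2 * B := by
    simpa using (abs_div_one_add_sq_sub_le y 0).trans (by simpa using hyB)
  have t₁ : |(5 * x / (2 * (1 + x ^ 2)) - 5 * y / (2 * (1 + y ^ 2))) * p ^ 2|
      ≤ 5 / 2 * |x - y| * B ^ 2 := by
    rw [abs_mul]
    exact mul_le_mul (abs_div_one_add_sq_sub_le x y) hp2 (abs_nonneg _) (by positivity)
  have t₂ : |5 * y / (2 * (1 + y ^ 2)) * (p ^ 2 - q ^ 2)| ≤ 5 / 2 * B * (2 * B * |p - q|) := by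
    rw [abs_mul]; exact mul_le_mul hfrac hpq (abs_nonneg _) (by positivity)
  have t₃ : |(x ^ 3 * (3 + x ^ 2) - y ^ 3 * (3 + y ^ 2)) / (2 * s ^ 2)|
      ≤ (9 * B ^ 2 + 5 * B ^ 4) / 2 * |x - y| := by
    rw [abs_div, abs_of_pos (by positivity : (0:ℝ) < 2 * s ^ 2), div_le_iff₀ (by positivity)]
    refine (abs_pow_three_mul_sub_le hx hy).trans ?_
    have : (B * s) ^ 4 ≤ B ^ 4 * s ^ 2 := by
      rw [mul_pow]
      exact mul_le_mul_of_nonneg_left (pow_le_pow_of_le_one hs.le hs1 (by norm_num)) (by positivity)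
    nlinarith [abs_nonneg (x - y), mul_le_mul_of_nonneg_right this (abs_nonneg (x - y))]
  rw [show odeRhs s x p - odeRhs s y q
      = (5 * x / (2 * (1 + x ^ 2)) - 5 * y / (2 * (1 + y ^ 2))) * p ^ 2
        + 5 * y / (2 * (1 + y ^ 2)) * (p ^ 2 - q ^ 2)
        + (x ^ 3 * (3 + x ^ 2) - y ^ 3 * (3 + y ^ 2)) / (2 * s ^ 2) by
    unfold odeRhs; field_simp; ring]
  refine (abs_add_three _ _ _).trans ?_
  nlinarith [mul_nonneg (sq_nonneg B) (abs_nonneg (x - y)),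
    mul_nonneg (sq_nonneg B) (abs_nonneg (p - q)),
    mul_nonneg (pow_nonneg hB 4) (abs_nonneg (p - q))]

lemma abs_le_mul_of_tendsto_nhdsGT_zero {f f' : ℝ → ℝ} {δ C : ℝ}
    (hf : ∀ s ∈ Ioc 0 δ, HasDerivAt f (f' s) s) (hf' : ∀ s ∈ Ioc 0 δ, |f' s| ≤ C)
    (hlim : Tendsto f (𝓝[>] 0) (𝓝 0)) {r : ℝ} (hr : r ∈ Ioc 0 δ) : |f r| ≤ C * r := by
  have hC : 0 ≤ C := (abs_nonneg _).trans (hf' r hr)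
  have hsr : ∀ s ∈ Ioo 0 r, |f r - f s| ≤ C * r := by
    intro s hs
    have hsub : Icc s r ⊆ Ioc 0 δ := fun x hx => ⟨hs.1.trans_le hx.1, hx.2.trans hr.2⟩
    have := norm_image_sub_le_of_norm_deriv_le_segment'
      (fun x hx => (hf x (hsub hx)).hasDerivWithinAt)
      (fun x hx => hf' x (hsub (Ico_subset_Icc_self hx))) r (right_mem_Icc.2 hs.2.le)
    rw [Real.norm_eq_abs] at this
    nlinarith [hs.1]
  have := le_of_tendsto ((tendsto_const_nhds (x := f r)).sub hlim).abs
    (eventually_of_mem (Ioo_mem_nhdsGT hr.1) hsr)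
  simpa using this

lemma abs_le_mul_sq_of_abs_div_add_le {φ ψ : ℝ → ℝ} {r C : ℝ} (hr : 0 < r)
    (hφ : ∀ s ∈ Icc 0 r, HasDerivWithinAt φ (ψ s) (Icc 0 r) s) (hφ0 : φ 0 = 0)
    (hC : ∀ s ∈ Ioc 0 r, |φ s / s + ψ s| ≤ C * s) : |φ r| ≤ C * r ^ 2 := by
  have hC0 : 0 ≤ C := nonneg_of_mul_nonneg_left ((abs_nonneg _).trans (hC r ⟨hr, le_rfl⟩)) hr
  -- `(s φ)' = s (φ / s + ψ)`, so the bound integrates to `|r φ r| ≤ C r³`.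
  have hu : ∀ s ∈ Icc 0 r,
      HasDerivWithinAt (fun t => t * φ t) (s * (φ s / s + ψ s)) (Icc 0 r) s := by
    intro s hs
    refine ((hasDerivAt_id' (x := s)).hasDerivWithinAt.fun_mul (hφ s hs)).congr_deriv ?_
    rcases eq_or_ne s 0 with rfl | hs0
    · simp [hφ0]
    · field_simp
  have hbound : ∀ s ∈ Ico 0 r, ‖s * (φ s / s + ψ s)‖ ≤ C * r ^ 2 := by
    intro s hs
    rcases eq_or_lt_of_le hs.1 with rfl | hs0
    · rw [zero_mul, norm_zero]; positivity
    · rw [Real.norm_eq_abs, abs_mul, abs_of_pos hs0]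
      nlinarith [mul_le_mul_of_nonneg_left (hC s ⟨hs0, hs.2.le⟩) hs0.le,
        mul_le_mul_of_nonneg_left (mul_self_le_mul_self hs0.le hs.2.le) hC0]
  have := norm_image_sub_le_of_norm_deriv_le_segment' hu hbound r (right_mem_Icc.2 hr.le)
  rw [Real.norm_eq_abs, zero_mul, sub_zero, abs_mul, abs_of_pos hr, sub_zero] at this
  nlinarith

lemma tendsto_div_nhdsGT_zero_of_hasDerivWithinAt {φ : ℝ → ℝ} {c δ : ℝ} (hδ : 0 < δ)
    (hφ0 : φ 0 = 0) (h : HasDerivWithinAt φ c (Icc 0 δ) 0) :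
    Tendsto (fun t => φ t / t) (𝓝[>] 0) (𝓝 c) := by
  have h' := h.mono_of_mem_nhdsWithin (Icc_mem_nhdsGT hδ)
  rw [hasDerivWithinAt_iff_tendsto_slope' self_notMem_Ioi] at h'
  convert h' using 1
  ext t
  simp [slope_def_field, hφ0]

theorem eqOn_zero_of_abs_deriv_div_add_le {φ ψ q : ℝ → ℝ} {δ L : ℝ} (hδ : 0 < δ) (hL : 0 ≤ L)
    (hLδ : 4 * L * δ < 1) (hφ : ∀ s ∈ Icc 0 δ, HasDerivWithinAt φ (ψ s) (Icc 0 δ) s)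
    (hψ : ContinuousOn ψ (Icc 0 δ)) (hφ0 : φ 0 = 0) (hψ0 : ψ 0 = 0)
    (hq : ∀ s ∈ Ioc 0 δ, HasDerivAt (fun t => φ t / t + ψ t) (q s) s)
    (hq_le : ∀ s ∈ Ioc 0 δ, |q s| ≤ L * (|φ s| / s + |ψ s|)) :
    EqOn φ 0 (Icc 0 δ) := by
  have h0 : (0 : ℝ) ∈ Icc 0 δ := left_mem_Icc.2 hδ.le
  obtain ⟨x₀, hx₀, hψM⟩ := isCompact_Icc.exists_isMaxOn (nonempty_Icc.2 hδ.le) hψ.abs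
  set M := |ψ x₀|
  have hφM : ∀ s ∈ Icc 0 δ, |φ s| ≤ M * s := fun s hs => by
    simpa [hφ0] using norm_image_sub_le_of_norm_deriv_le_segment' hφ
      (fun x hx => hψM (Ico_subset_Icc_self hx)) s hs
  have hQ : ∀ r ∈ Ioc 0 δ, |φ r / r + ψ r| ≤ 2 * L * M * r := by
    refine fun r hr => abs_le_mul_of_tendsto_nhdsGT_zero hq (fun s hs => ?_) ?_ hr
    · have : |φ s| / s ≤ M := (div_le_iff₀ hs.1).2 (hφM s (Ioc_subset_Icc_self hs))
      calc |q s| ≤ L * (|φ s| / s + |ψ s|) := hq_le s hs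
        _ ≤ L * (M + M) := by gcongr; exact hψM (Ioc_subset_Icc_self hs)
        _ = 2 * L * M := by ring
    · simpa [hψ0] using (tendsto_div_nhdsGT_zero_of_hasDerivWithinAt hδ hφ0 (hφ 0 h0)).add
        ((hψ 0 h0).mono_left (nhdsWithin_le_of_mem (Icc_mem_nhdsGT hδ)))
  have hψr : ∀ r ∈ Icc 0 δ, |ψ r| ≤ 4 * L * δ * M := by
    intro r hr
    rcases eq_or_lt_of_le hr.1 with rfl | hr0
    · rw [hψ0, abs_zero]; positivity
    have hφr : |φ r / r| ≤ 2 * L * M * r := by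
      have := abs_le_mul_sq_of_abs_div_add_le hr0
        (fun s hs => (hφ s ⟨hs.1, hs.2.trans hr.2⟩).mono (Icc_subset_Icc_right hr.2)) hφ0
        (fun s hs => hQ s ⟨hs.1, hs.2.trans hr.2⟩)
      rw [abs_div, abs_of_pos hr0, div_le_iff₀ hr0]
      linarith
    calc |ψ r| = |(φ r / r + ψ r) - φ r / r| := by ring_nf
      _ ≤ |φ r / r + ψ r| + |φ r / r| := abs_sub _ _
      _ ≤ 2 * L * M * r + 2 * L * M * r := add_le_add (hQ r ⟨hr0, hr.2⟩) hφr
      _ ≤ 4 * L * δ * M := by nlinarith [mul_nonneg hL (abs_nonneg (ψ x₀)), hr.2]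
  have hM : M = 0 := by nlinarith [hψr x₀ hx₀, abs_nonneg (ψ x₀)]
  intro s hs
  simpa [hM] using hφM s hs

section Solution

variable {w : ℝ → ℝ} {r₀ : ℝ}

lemma derivWithin_Icc_zero_eq_of_tendsto {a : ℝ} (hr₀ : 0 < r₀)
    (hw : ContDiffOn ℝ 1 w (Icc 0 r₀)) (ha : Tendsto (deriv w) (𝓝[>] 0) (𝓝 a)) :
    derivWithin w (Icc 0 r₀) 0 = a := by
  have hc : ContinuousWithinAt (derivWithin w (Icc 0 r₀)) (Icc 0 r₀) 0 :=
    hw.continuousOn_derivWithin (uniqueDiffOn_Icc hr₀) le_rfl 0 (left_mem_Icc.2 hr₀.le)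
  refine tendsto_nhds_unique (hc.tendsto.mono_left (nhdsWithin_le_of_mem (Icc_mem_nhdsGT hr₀)))
    (ha.congr' ?_)
  filter_upwards [Ioo_mem_nhdsGT hr₀] with r hr
  exact (derivWithin_of_mem_nhds (Icc_mem_nhds hr.1 hr.2)).symm

lemma abs_le_mul_of_abs_derivWithin_le {B s : ℝ} (hw : DifferentiableOn ℝ w (Icc 0 r₀))
    (hw0 : w 0 = 0) (hB : ∀ t ∈ Icc 0 r₀, |derivWithin w (Icc 0 r₀) t| ≤ B) (hs : s ∈ Ioo 0 r₀) :
    |w s| ≤ B * s ∧ |deriv w s| ≤ B := by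
  refine ⟨?_, ?_⟩
  · simpa [hw0] using norm_image_sub_le_of_norm_deriv_le_segment hw
      (fun t ht => hB t (Ico_subset_Icc_self ht)) s (Ioo_subset_Icc_self hs)
  · rw [← derivWithin_of_mem_nhds (Icc_mem_nhds hs.1 hs.2)]
    exact hB s (Ioo_subset_Icc_self hs)

lemma hasDerivAt_div_add_derivWithin_of_ode (hw : ContDiffOn ℝ 2 w (Icc 0 r₀))
    (ode : ∀ r ∈ Ioo 0 r₀, deriv (deriv w) r + deriv (fun t => w t / t) r
      = odeRhs r (w r) (deriv w r)) {r : ℝ} (hr : r ∈ Ioo 0 r₀) :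
    HasDerivAt (fun t => w t / t + derivWithin w (Icc 0 r₀) t)
      (odeRhs r (w r) (deriv w r)) r := by
  have hw' : ContDiffOn ℝ 2 w (Ioo 0 r₀) := hw.mono Ioo_subset_Icc_self
  have hnhds : Ioo 0 r₀ ∈ 𝓝 r := isOpen_Ioo.mem_nhds hr
  have hdw : DifferentiableAt ℝ w r :=
    (hw'.differentiableOn two_ne_zero r hr).differentiableAt hnhds
  have hddw : DifferentiableAt ℝ (deriv w) r :=
    ((hw'.deriv_of_isOpen isOpen_Ioo (m := 1) (by norm_num)).differentiableOn one_ne_zero r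
      hr).differentiableAt hnhds
  rw [← ode r hr, add_comm]
  refine ((hdw.div differentiableAt_fun_id hr.1.ne').hasDerivAt.add
    hddw.hasDerivAt).congr_of_eventuallyEq ?_
  filter_upwards [hnhds] with t ht
  rw [derivWithin_of_mem_nhds (Icc_mem_nhds ht.1 ht.2)]
  rfl

end Solution

lemma abs_odeRhs_sub_le_of_abs_derivWithin_le {w₁ w₂ : ℝ → ℝ} {r₀ B t : ℝ}
    (h₁ : DifferentiableOn ℝ w₁ (Icc 0 r₀)) (h₂ : DifferentiableOn ℝ w₂ (Icc 0 r₀))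
    (init₁ : w₁ 0 = 0) (init₂ : w₂ 0 = 0)
    (hB₁ : ∀ x ∈ Icc 0 r₀, |derivWithin w₁ (Icc 0 r₀) x| ≤ B)
    (hB₂ : ∀ x ∈ Icc 0 r₀, |derivWithin w₂ (Icc 0 r₀) x| ≤ B) (ht : t ∈ Ioo 0 r₀) (ht1 : t ≤ 1) :
    |odeRhs t (w₁ t) (deriv w₁ t) - odeRhs t (w₂ t) (deriv w₂ t)|
      ≤ (7 * B ^ 2 + 3 * B ^ 4) * (|w₁ t - w₂ t| / t
        + |derivWithin w₁ (Icc 0 r₀) t - derivWithin w₂ (Icc 0 r₀) t|) := by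
  obtain ⟨hw₁, hp₁⟩ := abs_le_mul_of_abs_derivWithin_le h₁ init₁ hB₁ ht
  obtain ⟨hw₂, hp₂⟩ := abs_le_mul_of_abs_derivWithin_le h₂ init₂ hB₂ ht
  rw [derivWithin_of_mem_nhds (Icc_mem_nhds ht.1 ht.2),
    derivWithin_of_mem_nhds (Icc_mem_nhds ht.1 ht.2)]
  refine (abs_odeRhs_sub_le ht.1 ht1 hw₁ hw₂ hp₁ hp₂).trans ?_
  gcongr
  exact le_div_self (abs_nonneg _) ht.1 ht1

/-- There exists `ε > 0` such that the ODE
`w'' + (w/r)' = (5w/(2(1+w²)))(w')² + (w³/(2r²))(3+w²)` has at most one C² solution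
on `[0,ε]` with initial data `w(0) = 0`, `w'(0) = a`: any two such solutions on
`[0,r₀]` agree on `[0,ε]` for some `ε > 0`. -/
theorem stmt_11 (a r₀ : ℝ) (hr₀ : 0 < r₀) (w₁ w₂ : ℝ → ℝ)
    (h₁ : ContDiffOn ℝ 2 w₁ (Set.Icc 0 r₀))
    (h₂ : ContDiffOn ℝ 2 w₂ (Set.Icc 0 r₀))
    (ode₁ : ∀ r ∈ Set.Ioo 0 r₀,
      deriv (deriv w₁) r + deriv (fun t => w₁ t / t) r
        = 5 * w₁ r / (2 * (1 + (w₁ r) ^ 2)) * (deriv w₁ r) ^ 2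
          + (w₁ r) ^ 3 / (2 * r ^ 2) * (3 + (w₁ r) ^ 2))
    (ode₂ : ∀ r ∈ Set.Ioo 0 r₀,
      deriv (deriv w₂) r + deriv (fun t => w₂ t / t) r
        = 5 * w₂ r / (2 * (1 + (w₂ r) ^ 2)) * (deriv w₂ r) ^ 2
          + (w₂ r) ^ 3 / (2 * r ^ 2) * (3 + (w₂ r) ^ 2))
    (init₁ : w₁ 0 = 0) (init₂ : w₂ 0 = 0)
    (d₁ : Tendsto (deriv w₁) (𝓝[>] 0) (𝓝 a))
    (d₂ : Tendsto (deriv w₂) (𝓝[>] 0) (𝓝 a)) :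
    ∃ ε > 0, ε ≤ r₀ ∧ Set.EqOn w₁ w₂ (Set.Icc 0 ε) := by
  set g₁ := derivWithin w₁ (Icc 0 r₀)
  set g₂ := derivWithin w₂ (Icc 0 r₀)
  have hg₁ : ContinuousOn g₁ (Icc 0 r₀) :=
    h₁.continuousOn_derivWithin (uniqueDiffOn_Icc hr₀) one_le_two
  have hg₂ : ContinuousOn g₂ (Icc 0 r₀) :=
    h₂.continuousOn_derivWithin (uniqueDiffOn_Icc hr₀) one_le_two
  obtain ⟨B₁, hB₁⟩ := isCompact_Icc.exists_bound_of_continuousOn hg₁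
  obtain ⟨B₂, hB₂⟩ := isCompact_Icc.exists_bound_of_continuousOn hg₂
  set B := max B₁ B₂
  set K := 7 * B ^ 2 + 3 * B ^ 4
  set δ := min (r₀ / 2) (1 / (4 * K + 4))
  have hK : 0 ≤ K := by positivity
  have hδ : 0 < δ := lt_min (by linarith) (by positivity)
  have hδr : δ < r₀ := (min_le_left _ _).trans_lt (by linarith)
  have hδ1 : δ ≤ 1 := (min_le_right _ _).trans (div_le_one_of_le₀ (by linarith) (by positivity))
  have hKδ : 4 * K * δ < 1 := calc
    4 * K * δ ≤ 4 * K * (1 / (4 * K + 4)) := by gcongr; exact min_le_right _ _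
    _ < 1 := by rw [mul_one_div, div_lt_one (by positivity)]; linarith
  have hsub : Icc 0 δ ⊆ Icc 0 r₀ := Icc_subset_Icc_right hδr.le
  refine ⟨δ, hδ, hδr.le, fun s hs => sub_eq_zero.1 (eqOn_zero_of_abs_deriv_div_add_le
    (φ := fun t => w₁ t - w₂ t) (ψ := fun t => g₁ t - g₂ t)
    (q := fun t => odeRhs t (w₁ t) (deriv w₁ t) - odeRhs t (w₂ t) (deriv w₂ t))
    hδ hK hKδ (fun t ht => ?_) (hg₁.sub hg₂ |>.mono hsub) (by simp [init₁, init₂]) ?_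
    (fun t ht => ?_) (fun t ht => ?_) hs)⟩
  · exact ((h₁.differentiableOn two_ne_zero t (hsub ht)).hasDerivWithinAt.sub
      (h₂.differentiableOn two_ne_zero t (hsub ht)).hasDerivWithinAt).mono hsub
  · exact sub_eq_zero.2 ((derivWithin_Icc_zero_eq_of_tendsto hr₀ (h₁.of_le one_le_two) d₁).trans
      (derivWithin_Icc_zero_eq_of_tendsto hr₀ (h₂.of_le one_le_two) d₂).symm)
  · have ht' : t ∈ Ioo 0 r₀ := ⟨ht.1, ht.2.trans_lt hδr⟩
    exact ((hasDerivAt_div_add_derivWithin_of_ode h₁ ode₁ ht').sub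
      (hasDerivAt_div_add_derivWithin_of_ode h₂ ode₂ ht')).congr_of_eventuallyEq
      (Eventually.of_forall fun x => by simp only [Pi.sub_apply, g₁, g₂]; ring)
  · exact abs_odeRhs_sub_le_of_abs_derivWithin_le (h₁.differentiableOn two_ne_zero)
      (h₂.differentiableOn two_ne_zero) init₁ init₂
      (fun x hx => (hB₁ x hx).trans (le_max_left B₁ B₂))
      (fun x hx => (hB₂ x hx).trans (le_max_right B₁ B₂)) ⟨ht.1, ht.2.trans_lt hδr⟩
      (ht.2.trans hδ1)
end

section
/- For any a ≠ 0, the function u(r) = -sign(a)√(1/a² - r²) (whose graph is a half sphere of radius 1/|a|) satisfies: w = u' solves w'' + (w/r)' = (5w/(2(1+w²)))(w')² + (w³/(2r²))(3+w²) on (0, 1/|a|), with w(0) = 0 and w'(0) = a. -/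
open Real Set

/-!
Write `R = 1/|a|`, `s = sign a` and `ρ(t) = √(R² - t²)`, so that `u = -s ρ` and `ρ' = -t/ρ`.
Then `w = s t/ρ`, `w' = s R²/ρ³`, `w'' = 3 s R² t/ρ⁵` and `w/t = s/ρ`, `(w/t)' = s t/ρ³`; the
equation becomes an identity of rational functions in `t` and `ρ` once `ρ² + t² = R²` and `s² = 1`
are used.
-/

namespace Real

theorem sign_sq_of_ne_zero {a : ℝ} (ha : a ≠ 0) : sign a ^ 2 = 1 := by
  rcases sign_apply_eq_of_ne_zero a ha with h | h <;> simp [h]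

theorem sign_mul_abs (a : ℝ) : sign a * |a| = a := by
  rcases lt_trichotomy a 0 with h | rfl | h
  · simp [sign_of_neg h, abs_of_neg h]
  · simp
  · simp [sign_of_pos h, abs_of_pos h]

end Real

section Hemisphere

variable {R r : ℝ}

theorem sq_sub_sq_pos (hr : r ∈ Ioo (-R) R) : 0 < R ^ 2 - r ^ 2 :=
  sub_pos.mpr (sq_lt_sq' hr.1 hr.2)

theorem sqrt_sq_sub_sq_pos (hr : r ∈ Ioo (-R) R) : 0 < √(R ^ 2 - r ^ 2) :=
  sqrt_pos.mpr (sq_sub_sq_pos hr)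

theorem sq_sqrt_sq_sub_sq (hr : r ∈ Ioo (-R) R) : √(R ^ 2 - r ^ 2) ^ 2 = R ^ 2 - r ^ 2 :=
  sq_sqrt (sq_sub_sq_pos hr).le

theorem hasDerivAt_sqrt_sq_sub_sq (hr : r ∈ Ioo (-R) R) :
    HasDerivAt (fun t => √(R ^ 2 - t ^ 2)) (-(r / √(R ^ 2 - r ^ 2))) r := by
  have hinner : HasDerivAt (fun t => R ^ 2 - t ^ 2) (-(2 * r)) r := by
    simpa using (hasDerivAt_pow 2 r).const_sub (R ^ 2)
  refine ((hasDerivAt_sqrt (sq_sub_sq_pos hr).ne').comp r hinner).congr_deriv ?_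
  field_simp

theorem hasDerivAt_inv_sqrt_sq_sub_sq_pow (hr : r ∈ Ioo (-R) R) (n : ℕ) :
    HasDerivAt (fun t => (√(R ^ 2 - t ^ 2) ^ n)⁻¹) (n * r / √(R ^ 2 - r ^ 2) ^ (n + 2)) r := by
  have hρ := sqrt_sq_sub_sq_pos hr
  refine (((hasDerivAt_sqrt_sq_sub_sq hr).fun_pow n).fun_inv (pow_ne_zero n hρ.ne')).congr_deriv ?_
  cases n with
  | zero => simp
  | succ k =>
    simp only [Nat.add_sub_cancel]
    field_simp
    ring

variable (s : ℝ)

theorem eqOn_deriv_neg_mul_sqrt_sq_sub_sq :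
    EqOn (deriv fun t => -s * √(R ^ 2 - t ^ 2)) (fun t => s * t * (√(R ^ 2 - t ^ 2))⁻¹)
      (Ioo (-R) R) := fun t ht => by
  convert ((hasDerivAt_sqrt_sq_sub_sq ht).const_mul (-s)).deriv using 1
  ring

theorem eqOn_deriv_mul_mul_inv_sqrt_sq_sub_sq :
    EqOn (deriv fun t => s * t * (√(R ^ 2 - t ^ 2))⁻¹)
      (fun t => s * R ^ 2 * (√(R ^ 2 - t ^ 2) ^ 3)⁻¹) (Ioo (-R) R) := fun t ht => by
  have hρ := sqrt_sq_sub_sq_pos ht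
  have hinv := hasDerivAt_inv_sqrt_sq_sub_sq_pow ht 1
  simp only [pow_one] at hinv
  rw [(((hasDerivAt_id' t).const_mul s).fun_mul hinv).deriv]
  beta_reduce
  set ρ := √(R ^ 2 - t ^ 2)
  have hR : R ^ 2 = ρ ^ 2 + t ^ 2 := by rw [sq_sqrt_sq_sub_sq ht]; ring
  rw [hR]
  field_simp
  ring

theorem eqOn_deriv_mul_inv_sqrt_sq_sub_sq_pow (n : ℕ) :
    EqOn (deriv fun t => s * (√(R ^ 2 - t ^ 2) ^ n)⁻¹)
      (fun t => s * n * t / √(R ^ 2 - t ^ 2) ^ (n + 2)) (Ioo (-R) R) := fun t ht => by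
  convert ((hasDerivAt_inv_sqrt_sq_sub_sq_pow ht n).const_mul s).deriv using 1
  ring

end Hemisphere

theorem hemisphere_ode_identity {s R r ρ : ℝ} (hs : s ^ 2 = 1) (hr : r ≠ 0) (hρ : ρ ≠ 0)
    (hR : R ^ 2 = ρ ^ 2 + r ^ 2) :
    3 * s * R ^ 2 * r / ρ ^ 5 + s * r / ρ ^ 3
      = 5 * (s * r / ρ) / (2 * (1 + (s * r / ρ) ^ 2)) * (s * R ^ 2 / ρ ^ 3) ^ 2
        + (s * r / ρ) ^ 3 / (2 * r ^ 2) * (3 + (s * r / ρ) ^ 2) := by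
  have h1 : 1 + (s * r / ρ) ^ 2 = R ^ 2 / ρ ^ 2 := by
    rw [hR]; field_simp; linear_combination r ^ 2 * hs
  rw [h1, hR]
  field_simp
  linear_combination (-(s * (8 * ρ ^ 2 + 5 * r ^ 2)) - s * r ^ 2 * (s ^ 2 + 1)) * hs

/-- For `a ≠ 0`, the function `u(r) = -sign(a)√(1/a² - r²)`, whose graph
is a half sphere of radius `1/|a|`, satisfies: `w = u'` solves
`w'' + (w/r)' = (5w/(2(1+w²)))(w')² + (w³/(2r²))(3+w²)` on `(0, 1/|a|)`, with
`w(0) = 0` and `w'(0) = a`. -/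
theorem stmt_12 (a : ℝ) (ha : a ≠ 0) (u : ℝ → ℝ)
    (hu : ∀ r, u r = -Real.sign a * Real.sqrt (1 / a ^ 2 - r ^ 2)) :
    deriv u 0 = 0 ∧ deriv (deriv u) 0 = a ∧
      ∀ r ∈ Set.Ioo 0 (1 / |a|),
        deriv (deriv (deriv u)) r + deriv (fun t => deriv u t / t) r
          = 5 * deriv u r / (2 * (1 + (deriv u r) ^ 2)) * (deriv (deriv u) r) ^ 2
            + (deriv u r) ^ 3 / (2 * r ^ 2) * (3 + (deriv u r) ^ 2) := by
  set R := 1 / |a|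
  set s := sign a
  have hR : 0 < R := by positivity
  have hsub : Ioo 0 R ⊆ Ioo (-R) R := Ioo_subset_Ioo_left (by linarith)
  obtain rfl : u = fun t => -s * √(R ^ 2 - t ^ 2) := by
    ext t
    rw [hu, div_pow, one_pow, sq_abs]
  have hw := eqOn_deriv_neg_mul_sqrt_sq_sub_sq (R := R) s
  have hw' := (hw.deriv isOpen_Ioo).trans (eqOn_deriv_mul_mul_inv_sqrt_sq_sub_sq s)
  have hw'' := (hw'.deriv isOpen_Ioo).trans (eqOn_deriv_mul_inv_sqrt_sq_sub_sq_pow (s * R ^ 2) 3)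
  have hw_div : EqOn (fun t => deriv (fun t => -s * √(R ^ 2 - t ^ 2)) t / t)
      (fun t => s * (√(R ^ 2 - t ^ 2) ^ 1)⁻¹) (Ioo 0 R) := fun t ht => by
    dsimp only
    rw [hw (hsub ht)]
    field_simp [ht.1.ne']
  have hw_div' := (hw_div.deriv isOpen_Ioo).trans
    ((eqOn_deriv_mul_inv_sqrt_sq_sub_sq_pow s 1).mono hsub)
  have h0 : (0 : ℝ) ∈ Ioo (-R) R := ⟨neg_lt_zero.mpr hR, hR⟩
  refine ⟨by rw [hw h0]; simp, ?_, fun r hr => ?_⟩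
  · rw [hw' h0]
    calc s * R ^ 2 * (√(R ^ 2 - 0 ^ 2) ^ 3)⁻¹ = s * R⁻¹ := by
          rw [zero_pow two_ne_zero, sub_zero, sqrt_sq hR.le]
          field_simp
      _ = a := by rw [show R⁻¹ = |a| by simp [R], sign_mul_abs]
  · have hr' := hsub hr
    rw [hw'' hr', hw_div' hr, hw hr', hw' hr']
    have := hemisphere_ode_identity (R := R) (sign_sq_of_ne_zero ha) hr.1.ne'
      (sqrt_sq_sub_sq_pos hr').ne' (by rw [sq_sqrt_sq_sub_sq hr']; ring)
    push_cast
    linear_combination this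
end

section
/- Let w ∈ C²((0,a₀]) solve w'' + (w/r)' = (5w/(2(1+w²)))(w')² + (w³/(2r²))(3+w²) + (λ/r)(1+w²)^{5/2} with lim_{r→0⁺} w(r) = 0. Then w(r) - (λ/2) r log r extends to a C¹ function on [0,a₀]; in particular lim_{r→0⁺}(w'(r) - (λ/2) log r) exists. -/
/-!
With `v = w' + w / r` the equation reads `v' = F(w, w', r)`. Near `0` we have `|w| ≤ 1/10`, and
there the flux `B = w w' + w² / (2r)` satisfies `B' = e + w F ≥ e / 2 - 4λ²`, where
`e = w'² + w² / (2r²)`. Since `w → 0`, the increasing function `B + 4λ² r` cannot become negative,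
so `e` is integrable at `0`. As `|F - λ / r| ≤ C e`, the function `v - λ log r` has an integrable
derivative and hence a limit `A` at `0`. L'Hôpital's rule then gives
`w / r - (λ/2) log r → A/2 - λ/4`, hence `w' - (λ/2) log r → A/2 + λ/4`, and a function that is
`C¹` on `(0, a₀]` whose value and derivative converge at `0` extends to a `C¹` function on
`[0, a₀]`.
-/

open Real Set Filter Topology MeasureTheory

noncomputable def willmoreRHS (lam x y r : ℝ) : ℝ :=
  5 * x / (2 * (1 + x ^ 2)) * y ^ 2 + x ^ 3 / (2 * r ^ 2) * (3 + x ^ 2)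
    + lam / r * √(1 + x ^ 2) ^ 5

noncomputable def radialEnergy (x y r : ℝ) : ℝ := y ^ 2 + x ^ 2 / (2 * r ^ 2)

lemma radialEnergy_nonneg (x y r : ℝ) : 0 ≤ radialEnergy x y r := by
  unfold radialEnergy; positivity

lemma sqrt_one_add_sq_pow_five_bounds {x : ℝ} (hx : |x| ≤ 1 / 10) :
    1 ≤ √(1 + x ^ 2) ^ 5 ∧ √(1 + x ^ 2) ^ 5 ≤ 1 + 3 * x ^ 2 := by
  have hx2 : x ^ 2 ≤ 1 / 100 := by nlinarith [sq_abs x, abs_nonneg x]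
  have h1 : 1 ≤ √(1 + x ^ 2) := by simp [Real.one_le_sqrt]; positivity
  have h2 : √(1 + x ^ 2) ≤ 1 + x ^ 2 / 2 :=
    Real.sqrt_le_iff.2 ⟨by positivity, by nlinarith [sq_nonneg x]⟩
  refine ⟨one_le_pow₀ h1, (pow_le_pow_left₀ (by positivity) h2 5).trans ?_⟩
  nlinarith [sq_nonneg x, mul_nonneg (sq_nonneg x) (sq_nonneg x),
    mul_nonneg (mul_nonneg (sq_nonneg x) (sq_nonneg x)) (sq_nonneg x)]

lemma neg_radialEnergy_le_mul_willmoreRHS {lam x y r : ℝ} (hr : 0 < r) (hx : |x| ≤ 1 / 10) :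
    -(radialEnergy x y r / 2) - 4 * lam ^ 2 ≤ x * willmoreRHS lam x y r := by
  obtain ⟨hs1, hs2⟩ := sqrt_one_add_sq_pow_five_bounds hx
  set s := √(1 + x ^ 2) ^ 5
  have hx2 : x ^ 2 ≤ 1 / 100 := by nlinarith [sq_abs x, abs_nonneg x]
  have hy : 0 ≤ 5 * x ^ 2 * y ^ 2 / (2 * (1 + x ^ 2)) := by positivity
  have hx4 : 0 ≤ x ^ 4 * (3 + x ^ 2) / (2 * r ^ 2) := by positivity
  -- AM-GM: `|x λ s / r| ≤ 2 |x/r| |λ| ≤ (x/r)²/4 + 4λ²`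
  have hamgm : -(x ^ 2 / (4 * r ^ 2) + 4 * lam ^ 2) ≤ x * (lam / r * s) := by
    have hxr : x * (lam / r * s) = (x / r) * lam * s := by ring
    have hq : x ^ 2 / (4 * r ^ 2) = (x / r) ^ 2 / 4 := by field_simp
    rw [hxr, hq]
    nlinarith [sq_nonneg (x / r + 4 * lam), sq_nonneg (x / r - 4 * lam),
      mul_nonneg (sq_nonneg (x / r + 4 * lam)) (by linarith : (0:ℝ) ≤ s - 1),
      mul_nonneg (sq_nonneg (x / r - 4 * lam)) (by linarith : (0:ℝ) ≤ 2 - s)]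
  have hsplit : x * willmoreRHS lam x y r = 5 * x ^ 2 * y ^ 2 / (2 * (1 + x ^ 2))
      + x ^ 4 * (3 + x ^ 2) / (2 * r ^ 2) + x * (lam / r * s) := by
    unfold willmoreRHS; ring
  have he : radialEnergy x y r / 2 = y ^ 2 / 2 + x ^ 2 / (4 * r ^ 2) := by
    unfold radialEnergy; ring
  rw [hsplit, he]
  nlinarith [sq_nonneg y]

lemma abs_willmoreRHS_sub_le {lam x y r r₀ : ℝ} (hr : 0 < r) (hrr₀ : r ≤ r₀)
    (hx : |x| ≤ 1 / 10) :
    |willmoreRHS lam x y r - lam / r| ≤ (1 + 6 * |lam| * r₀) * radialEnergy x y r := by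
  obtain ⟨hs1, hs2⟩ := sqrt_one_add_sq_pow_five_bounds hx
  set s := √(1 + x ^ 2) ^ 5
  have hx2 : x ^ 2 ≤ 1 / 100 := by nlinarith [sq_abs x, abs_nonneg x]
  have hT1 : |5 * x / (2 * (1 + x ^ 2)) * y ^ 2| ≤ y ^ 2 := by
    rw [abs_mul, abs_of_nonneg (sq_nonneg y)]
    refine mul_le_of_le_one_left (sq_nonneg y) ?_
    rw [abs_div, abs_of_pos (by positivity : (0:ℝ) < 2 * (1 + x ^ 2)), div_le_one (by positivity),
      abs_mul, abs_of_pos (by norm_num : (0:ℝ) < 5)]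
    nlinarith [sq_nonneg x]
  have hT2 : |x ^ 3 / (2 * r ^ 2) * (3 + x ^ 2)| ≤ x ^ 2 / (2 * r ^ 2) := by
    rw [show x ^ 3 / (2 * r ^ 2) * (3 + x ^ 2) = x * (3 + x ^ 2) * (x ^ 2 / (2 * r ^ 2)) by ring,
      abs_mul, abs_of_nonneg (by positivity : 0 ≤ x ^ 2 / (2 * r ^ 2))]
    refine mul_le_of_le_one_left (by positivity) ?_
    rw [abs_mul, abs_of_pos (by positivity : (0:ℝ) < 3 + x ^ 2)]
    nlinarith [abs_nonneg x]
  have hT3 : |lam / r * (s - 1)| ≤ 6 * |lam| * r₀ * (x ^ 2 / (2 * r ^ 2)) :=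
    calc |lam / r * (s - 1)| = |lam| * (s - 1) / r := by
          rw [abs_mul, abs_div, abs_of_pos hr, abs_of_nonneg (by linarith : 0 ≤ s - 1)]; ring
      _ ≤ |lam| * (3 * x ^ 2) / r := by gcongr; linarith
      _ = 6 * |lam| * r * (x ^ 2 / (2 * r ^ 2)) := by field_simp; ring
      _ ≤ 6 * |lam| * r₀ * (x ^ 2 / (2 * r ^ 2)) := by gcongr
  have hsplit : willmoreRHS lam x y r - lam / r = 5 * x / (2 * (1 + x ^ 2)) * y ^ 2
      + x ^ 3 / (2 * r ^ 2) * (3 + x ^ 2) + lam / r * (s - 1) := by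
    unfold willmoreRHS; ring
  have hy : 0 ≤ 6 * |lam| * r₀ * y ^ 2 := by have := hr.trans_le hrr₀; positivity
  rw [hsplit, radialEnergy]
  refine (abs_add_three _ _ _).trans ?_
  nlinarith

lemma integrableOn_Ioc_of_le_deriv {f ψ ψ' : ℝ → ℝ} {a b m : ℝ}
    (hf : ContinuousOn f (Ioc a b)) (hf0 : ∀ x ∈ Ioc a b, 0 ≤ f x)
    (hψ : ∀ x ∈ Ioc a b, HasDerivAt ψ (ψ' x) x) (hfψ : ∀ x ∈ Ioc a b, f x ≤ ψ' x)
    (hm : ∀ x ∈ Ioc a b, m ≤ ψ x) : IntegrableOn f (Ioc a b) := by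
  rcases le_or_gt b a with hba | hab
  · simp [Ioc_eq_empty_of_le hba]
  set u : ℕ → ℝ := fun n => a + (b - a) * (1 / ((n : ℝ) + 1))
  have hu : ∀ n, u n ∈ Ioc a b := fun n => by
    have h0 : 0 < 1 / ((n : ℝ) + 1) := by positivity
    have h1 : 1 / ((n : ℝ) + 1) ≤ 1 := div_le_one_of_le₀ (by simp) (by positivity)
    constructor <;> simp only [u] <;> nlinarith
  have hsub : ∀ n, Icc (u n) b ⊆ Ioc a b := fun n =>
    Icc_subset_Ioc_iff (hu n).2 |>.2 ⟨(hu n).1, le_rfl⟩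
  have hfi : ∀ n, IntegrableOn f (Icc (u n) b) := fun n =>
    (hf.mono (hsub n)).integrableOn_Icc
  have hlim : Tendsto u atTop (𝓝 a) := by
    simpa [u] using (tendsto_const_nhds (x := a)).add
      ((tendsto_const_nhds (x := b - a)).mul tendsto_one_div_add_atTop_nhds_zero_nat)
  refine integrableOn_Ioc_of_intervalIntegral_norm_bounded_left (I := ψ b - m)
    (fun n => (hfi n).mono_set Ioc_subset_Icc_self) hlim (Eventually.of_forall fun n => ?_)
  have hint : ∫ x in u n..b, f x ≤ ψ b - ψ (u n) :=
    intervalIntegral.integral_le_sub_of_hasDeriv_right_of_le (hu n).2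
      (fun x hx => (hψ x (hsub n hx)).continuousAt.continuousWithinAt)
      (fun x hx => (hψ x (hsub n (Ioo_subset_Icc_self hx))).hasDerivWithinAt) (hfi n)
      (fun x hx => hfψ x (hsub n (Ioo_subset_Icc_self hx)))
  have hnorm : ∫ x in Ioc (u n) b, ‖f x‖ = ∫ x in u n..b, f x := by
    rw [intervalIntegral.integral_of_le (hu n).2]
    exact setIntegral_congr_fun measurableSet_Ioc fun x hx =>
      norm_of_nonneg (hf0 x (hsub n (Ioc_subset_Icc_self hx)))
  linarith [hm (u n) (hu n)]

lemma tendsto_nhdsGT_of_integrableOn_deriv {E : Type*} [NormedAddCommGroup E]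
    [NormedSpace ℝ E] [CompleteSpace E] {f f' : ℝ → E} {a b : ℝ} (hab : a < b)
    (hf : ∀ x ∈ Ioc a b, HasDerivAt f (f' x) x) (hf' : IntegrableOn f' (Ioc a b)) :
    Tendsto f (𝓝[>] a) (𝓝 (f b - ∫ t in a..b, f' t)) := by
  have hf'Icc : IntegrableOn f' (uIcc a b) := by
    rwa [uIcc_of_le hab.le, integrableOn_Icc_iff_integrableOn_Ioc]
  have hprim : ContinuousWithinAt (fun x => ∫ t in x..b, f' t) (Icc a b) a := by
    have := intervalIntegral.continuousOn_primitive_interval_left hf'Icc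
    rw [uIcc_of_le hab.le] at this
    exact this a (left_mem_Icc.2 hab.le)
  have hlim : Tendsto (fun x => f b - ∫ t in x..b, f' t) (𝓝[>] a)
      (𝓝 (f b - ∫ t in a..b, f' t)) := by
    refine tendsto_const_nhds.sub (hprim.tendsto.mono_left ?_)
    rw [← nhdsWithin_Ioc_eq_nhdsGT hab]
    exact nhdsWithin_mono _ Ioc_subset_Icc_self
  refine hlim.congr' ?_
  filter_upwards [Ioc_mem_nhdsGT hab] with x hx
  have hsub : uIcc x b ⊆ Ioc a b := by
    rw [uIcc_of_le hx.2]; exact Icc_subset_Ioc_iff hx.2 |>.2 ⟨hx.1, le_rfl⟩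
  rw [intervalIntegral.integral_eq_sub_of_hasDerivAt (fun y hy => hf y (hsub hy))
    ((hf'.mono_set hsub).intervalIntegrable), sub_sub_cancel]

lemma contDiffOn_Icc_update_of_tendsto {f : ℝ → ℝ} {a b c L : ℝ} (hab : a < b)
    (hf : ContDiffOn ℝ 1 f (Ioc a b)) (hc : Tendsto f (𝓝[>] a) (𝓝 c))
    (hL : Tendsto (deriv f) (𝓝[>] a) (𝓝 L)) :
    ContDiffOn ℝ 1 (Function.update f a c) (Icc a b) := by
  set g := Function.update f a c with hg
  set D := Function.update (derivWithin f (Ioc a b)) a L with hD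
  have hIoc : ∀ x ∈ Ioc a b, Ioc a b ∈ 𝓝[Icc a b] x := fun x hx =>
    mem_of_superset (inter_mem_nhdsWithin (Icc a b) (Ioi_mem_nhds hx.1))
      fun y hy => ⟨hy.2, hy.1.2⟩
  have hgf : ∀ x ∈ Ioc a b, g =ᶠ[𝓝[Icc a b] x] f := fun x hx => by
    filter_upwards [hIoc x hx] with y hy using Function.update_of_ne hy.1.ne' _ _
  have hDf : D =ᶠ[𝓝[>] a] deriv f := by
    filter_upwards [Ioo_mem_nhdsGT hab] with y hy
    rw [hD, Function.update_of_ne hy.1.ne', derivWithin_of_mem_nhds (Ioc_mem_nhds hy.1 hy.2)]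
  have hderiv : ∀ x ∈ Icc a b, HasDerivWithinAt g (D x) (Icc a b) x := by
    intro x hx
    rcases hx.1.eq_or_lt with rfl | hax
    · have hgf' : g =ᶠ[𝓝[>] a] f := by
        filter_upwards [self_mem_nhdsWithin] with y hy using Function.update_of_ne hy.ne' _ _
      have hdiff : DifferentiableOn ℝ g (Ioo a b) := fun y hy =>
        ((hf.differentiableOn one_ne_zero y (Ioo_subset_Ioc_self hy)).mono
          Ioo_subset_Ioc_self).congr (fun z hz => Function.update_of_ne hz.1.ne' _ _)
          (Function.update_of_ne hy.1.ne' _ _)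
      have hcont : ContinuousWithinAt g (Ioo a b) a := by
        rw [ContinuousWithinAt, nhdsWithin_Ioo_eq_nhdsGT hab, hg, Function.update_self]
        exact hc.congr' hgf'.symm
      have hderiv_lim : Tendsto (deriv g) (𝓝[>] a) (𝓝 L) := by
        refine hL.congr' ?_
        filter_upwards [self_mem_nhdsWithin] with y hy
        refine (Filter.EventuallyEq.deriv_eq ?_).symm
        filter_upwards [lt_mem_nhds hy] with z hz using Function.update_of_ne hz.ne' _ _
      rw [hD, Function.update_self]
      exact (hasDerivWithinAt_Ici_of_tendsto_deriv hdiff hcont (Ioo_mem_nhdsGT hab)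
        hderiv_lim).mono Icc_subset_Ici_self
    · have hx' : x ∈ Ioc a b := ⟨hax, hx.2⟩
      rw [hD, Function.update_of_ne hax.ne']
      exact ((hf.differentiableOn one_ne_zero x hx').hasDerivWithinAt.mono_of_mem_nhdsWithin
        (hIoc x hx')).congr_of_eventuallyEq (hgf x hx') (Function.update_of_ne hax.ne' _ _)
  have hDcont : ContinuousOn D (Icc a b) := by
    intro x hx
    rcases hx.1.eq_or_lt with rfl | hax
    · refine (continuousWithinAt_Ioi_iff_Ici.1 ?_).mono Icc_subset_Ici_self
      rw [ContinuousWithinAt, hD, Function.update_self, ← hD]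
      exact hL.congr' hDf.symm
    · have hx' : x ∈ Ioc a b := ⟨hax, hx.2⟩
      have := (hf.continuousOn_derivWithin (uniqueDiffOn_Ioc a b) le_rfl x hx')
        |>.mono_of_mem_nhdsWithin (hIoc x hx')
      refine this.congr_of_eventuallyEq ?_ (Function.update_of_ne hax.ne' _ _)
      filter_upwards [hIoc x hx'] with y hy using Function.update_of_ne hy.1.ne' _ _
  refine (contDiffOn_one_iff_derivWithin (uniqueDiffOn_Icc hab)).2
    ⟨fun x hx => (hderiv x hx).differentiableWithinAt, hDcont.congr fun x hx => ?_⟩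
  exact (hderiv x hx).derivWithin (uniqueDiffOn_Icc hab x hx)

lemma tendsto_mul_log_nhdsGT_zero : Tendsto (fun r => r * log r) (𝓝[>] 0) (𝓝 0) := by
  simpa using continuous_mul_log.tendsto 0 |>.mono_left nhdsWithin_le_nhds

lemma tendsto_div_sub_log_of_tendsto {w w' : ℝ → ℝ} {lam A b : ℝ} (hb : 0 < b)
    (hw : ∀ r ∈ Ioo 0 b, HasDerivAt w (w' r) r) (hw0 : Tendsto w (𝓝[>] 0) (𝓝 0))
    (hA : Tendsto (fun r => w' r + w r / r - lam * log r) (𝓝[>] 0) (𝓝 A)) :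
    Tendsto (fun r => w r / r - lam / 2 * log r) (𝓝[>] 0) (𝓝 (A / 2 - lam / 4)) := by
  have hpos : ∀ᶠ r in 𝓝[>] (0 : ℝ), r ∈ Ioo 0 b := Ioo_mem_nhdsGT hb
  have hid : Tendsto (fun r : ℝ => r) (𝓝[>] 0) (𝓝 0) := tendsto_nhdsWithin_of_tendsto_nhds
    (continuous_id.tendsto 0)
  -- L'Hôpital for `(r w - (λ/2) r² log r) / r²`
  have key := HasDerivAt.lhopital_zero_nhdsGT
    (f := fun r => r * w r - lam / 2 * r * (r * log r)) (g := fun r => r ^ 2)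
    (f' := fun r => w r + r * w' r - lam * r * log r - lam / 2 * r) (g' := fun r => 2 * r)
    (a := 0) (l := 𝓝 (A / 2 - lam / 4)) ?_ ?_ ?_ ?_ ?_ ?_
  · refine key.congr' ?_
    filter_upwards [hpos] with r hr
    field_simp [hr.1.ne']
  · filter_upwards [hpos] with r hr
    refine (((hasDerivAt_id' r).fun_mul (hw r hr)).fun_sub (((hasDerivAt_id' r).const_mul
      (lam / 2)).fun_mul (hasDerivAt_mul_log hr.1.ne'))).congr_deriv ?_
    ring
  · exact Eventually.of_forall fun r => by simpa using hasDerivAt_pow 2 r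
  · filter_upwards [hpos] with r hr using by have := hr.1; positivity
  · simpa using (hid.mul hw0).sub ((tendsto_const_nhds.mul hid).mul tendsto_mul_log_nhdsGT_zero)
  · simpa using (hid.pow 2)
  · have := (hA.div_const 2).sub_const (lam / 4)
    refine this.congr' ?_
    filter_upwards [hpos] with r hr
    field_simp [hr.1.ne']
    ring

lemma nonpos_of_forall_mul_deriv_le {w w' : ℝ → ℝ} {b c : ℝ} (hb : 0 < b)
    (hw : ∀ r ∈ Ioc 0 b, HasDerivAt w (w' r) r) (hw0 : Tendsto w (𝓝[>] 0) (𝓝 0))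
    (hc : ∀ r ∈ Ioc 0 b, w r * w' r ≤ -c) : c ≤ 0 := by
  -- `(w² + 2 c r)' = 2 (w w' + c) ≤ 0`, but `w² + 2 c r → 0` at `0`
  set u : ℝ → ℝ := fun r => w r ^ 2 + 2 * c * r
  have hu : ∀ r ∈ Ioc 0 b, HasDerivAt u (2 * (w r * w' r + c)) r := fun r hr => by
    refine (((hw r hr).fun_pow 2).fun_add ((hasDerivAt_id' r).const_mul (2 * c))).congr_deriv ?_
    ring
  have hanti : AntitoneOn u (Ioc 0 b) := by
    refine antitoneOn_of_deriv_nonpos (convex_Ioc 0 b)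
      (fun r hr => (hu r hr).continuousAt.continuousWithinAt) (fun r hr => ?_) (fun r hr => ?_)
      <;> rw [interior_Ioc] at hr
    · exact (hu r (Ioo_subset_Ioc_self hr)).differentiableAt.differentiableWithinAt
    · rw [(hu r (Ioo_subset_Ioc_self hr)).deriv]
      linarith [hc r (Ioo_subset_Ioc_self hr)]
  have hu0 : Tendsto u (𝓝[>] 0) (𝓝 0) := by
    simpa [u] using (hw0.pow 2).add (tendsto_const_nhds.mul
      (tendsto_nhdsWithin_of_tendsto_nhds ((continuous_id (X := ℝ)).tendsto 0)))
  have hub : u b ≤ 0 := by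
    refine ge_of_tendsto hu0 ?_
    filter_upwards [Ioc_mem_nhdsGT hb] with r hr using hanti hr (right_mem_Ioc.2 hb) hr.2
  nlinarith [sq_nonneg (w b)]

lemma hasDerivAt_radialFlux {lam r : ℝ} {w w' : ℝ → ℝ} (hr : r ≠ 0)
    (hw : HasDerivAt w (w' r) r)
    (hv : HasDerivAt (fun t => w' t + w t / t) (willmoreRHS lam (w r) (w' r) r) r) :
    HasDerivAt (fun t => w t * w' t + w t ^ 2 / (2 * t))
      (radialEnergy (w r) (w' r) r + w r * willmoreRHS lam (w r) (w' r) r) r := by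
  -- only `w' + w / t` is known to be differentiable, so the flux is written through it
  have hflux : (fun t => w t * w' t + w t ^ 2 / (2 * t))
      = fun t => w t * (w' t + w t / t) - w t ^ 2 / (2 * t) := by
    funext t; ring
  rw [hflux]
  refine ((hw.fun_mul hv).fun_sub ((hw.fun_pow 2).fun_div
    ((hasDerivAt_id' r).const_mul 2) (by simpa using hr))).congr_deriv ?_
  unfold radialEnergy
  field_simp
  ring

section FirstOrderSystem

variable {lam b : ℝ} {w w' : ℝ → ℝ}

lemma radialFlux_add_nonneg (hw : ∀ r ∈ Ioc 0 b, HasDerivAt w (w' r) r)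
    (hv : ∀ r ∈ Ioc 0 b,
      HasDerivAt (fun t => w' t + w t / t) (willmoreRHS lam (w r) (w' r) r) r)
    (hsmall : ∀ r ∈ Ioc 0 b, |w r| ≤ 1 / 10) (hw0 : Tendsto w (𝓝[>] 0) (𝓝 0)) :
    ∀ r ∈ Ioc 0 b, 0 ≤ w r * w' r + w r ^ 2 / (2 * r) + 4 * lam ^ 2 * r := by
  set ψ : ℝ → ℝ := fun r => w r * w' r + w r ^ 2 / (2 * r) + 4 * lam ^ 2 * r
  have hψ : ∀ r ∈ Ioc 0 b, HasDerivAt ψ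
      (radialEnergy (w r) (w' r) r + w r * willmoreRHS lam (w r) (w' r) r + 4 * lam ^ 2) r :=
    fun r hr => by
      simpa using (hasDerivAt_radialFlux hr.1.ne' (hw r hr) (hv r hr)).fun_add
        ((hasDerivAt_id' r).const_mul (4 * lam ^ 2))
  have hmono : MonotoneOn ψ (Ioc 0 b) := by
    refine monotoneOn_of_deriv_nonneg (convex_Ioc 0 b)
      (fun r hr => (hψ r hr).continuousAt.continuousWithinAt) (fun r hr => ?_) (fun r hr => ?_)
      <;> rw [interior_Ioc] at hr
    · exact (hψ r (Ioo_subset_Ioc_self hr)).differentiableAt.differentiableWithinAt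
    · rw [(hψ r (Ioo_subset_Ioc_self hr)).deriv]
      linarith [neg_radialEnergy_le_mul_willmoreRHS (lam := lam) (y := w' r) hr.1
        (hsmall r (Ioo_subset_Ioc_self hr)), radialEnergy_nonneg (w r) (w' r) r]
  intro r₁ hr₁
  by_contra! hneg
  refine absurd (nonpos_of_forall_mul_deriv_le (c := -ψ r₁) hr₁.1
    (fun r hr => hw r ⟨hr.1, hr.2.trans hr₁.2⟩) hw0 fun r hr => ?_) (by linarith)
  have hψr := hmono ⟨hr.1, hr.2.trans hr₁.2⟩ hr₁ hr.2
  have : 0 ≤ w r ^ 2 / (2 * r) + 4 * lam ^ 2 * r := by have := hr.1; positivity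
  simp only [ψ] at *
  linarith

lemma continuousOn_willmoreRHS (hw : ∀ r ∈ Ioc 0 b, HasDerivAt w (w' r) r)
    (hw' : ContinuousOn w' (Ioc 0 b)) :
    ContinuousOn (fun r => willmoreRHS lam (w r) (w' r) r) (Ioc 0 b) := by
  have hwc : ContinuousOn w (Ioc 0 b) := fun r hr => (hw r hr).continuousAt.continuousWithinAt
  unfold willmoreRHS
  fun_prop (disch := (intro r (hr : r ∈ Ioc 0 b); have := hr.1; positivity))

lemma continuousOn_radialEnergy (hw : ∀ r ∈ Ioc 0 b, HasDerivAt w (w' r) r)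
    (hw' : ContinuousOn w' (Ioc 0 b)) :
    ContinuousOn (fun r => radialEnergy (w r) (w' r) r) (Ioc 0 b) := by
  have hwc : ContinuousOn w (Ioc 0 b) := fun r hr => (hw r hr).continuousAt.continuousWithinAt
  unfold radialEnergy
  fun_prop (disch := (intro r (hr : r ∈ Ioc 0 b); have := hr.1; positivity))

lemma integrableOn_radialEnergy (hw : ∀ r ∈ Ioc 0 b, HasDerivAt w (w' r) r)
    (hw' : ContinuousOn w' (Ioc 0 b))
    (hv : ∀ r ∈ Ioc 0 b,
      HasDerivAt (fun t => w' t + w t / t) (willmoreRHS lam (w r) (w' r) r) r)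
    (hsmall : ∀ r ∈ Ioc 0 b, |w r| ≤ 1 / 10) (hw0 : Tendsto w (𝓝[>] 0) (𝓝 0)) :
    IntegrableOn (fun r => radialEnergy (w r) (w' r) r) (Ioc 0 b) := by
  refine integrableOn_Ioc_of_le_deriv (m := 0) (continuousOn_radialEnergy hw hw')
    (fun r _ => radialEnergy_nonneg _ _ _)
    (fun r hr => (((hasDerivAt_radialFlux hr.1.ne' (hw r hr) (hv r hr)).fun_add
      ((hasDerivAt_id' r).const_mul (4 * lam ^ 2))).const_mul 2)) (fun r hr => ?_)
    (fun r hr => by simpa using radialFlux_add_nonneg hw hv hsmall hw0 r hr)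
  linarith [neg_radialEnergy_le_mul_willmoreRHS (lam := lam) (y := w' r) hr.1 (hsmall r hr)]

lemma exists_tendsto_sub_log (hb : 0 < b) (hw : ∀ r ∈ Ioc 0 b, HasDerivAt w (w' r) r)
    (hw' : ContinuousOn w' (Ioc 0 b))
    (hv : ∀ r ∈ Ioc 0 b,
      HasDerivAt (fun t => w' t + w t / t) (willmoreRHS lam (w r) (w' r) r) r)
    (hsmall : ∀ r ∈ Ioc 0 b, |w r| ≤ 1 / 10) (hw0 : Tendsto w (𝓝[>] 0) (𝓝 0)) :
    ∃ A, Tendsto (fun r => w' r + w r / r - lam * log r) (𝓝[>] 0) (𝓝 A) := by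
  set G : ℝ → ℝ := fun r => willmoreRHS lam (w r) (w' r) r - lam / r
  have hGc : ContinuousOn G (Ioc 0 b) :=
    (continuousOn_willmoreRHS hw hw').sub
      (continuousOn_const.div continuousOn_id fun r hr => hr.1.ne')
  have hG : IntegrableOn G (Ioc 0 b) := by
    refine ((integrableOn_radialEnergy hw hw' hv hsmall hw0).const_mul
      (1 + 6 * |lam| * b)).mono' (hGc.aestronglyMeasurable measurableSet_Ioc) ?_
    refine (ae_restrict_iff' measurableSet_Ioc).2 (Eventually.of_forall fun r hr => ?_)
    exact abs_willmoreRHS_sub_le hr.1 hr.2 (hsmall r hr)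
  refine ⟨_, tendsto_nhdsGT_of_integrableOn_deriv hb (fun r hr => ?_) hG⟩
  simpa [G, div_eq_mul_inv] using (hv r hr).fun_sub ((hasDerivAt_log hr.1.ne').const_mul lam)

end FirstOrderSystem

lemma hasDerivAt_deriv_add_div_of_ode {lam a₀ : ℝ} {w : ℝ → ℝ}
    (hc : ContDiffOn ℝ 2 w (Ioc 0 a₀))
    (ode : ∀ r ∈ Ioo 0 a₀,
      deriv (deriv w) r + deriv (fun t => w t / t) r
        = 5 * w r / (2 * (1 + (w r) ^ 2)) * (deriv w r) ^ 2
          + (w r) ^ 3 / (2 * r ^ 2) * (3 + (w r) ^ 2)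
          + (lam / r) * (Real.sqrt (1 + (w r) ^ 2)) ^ 5) :
    ∀ r ∈ Ioo 0 a₀, HasDerivAt (fun t => deriv w t + w t / t)
      (willmoreRHS lam (w r) (deriv w r) r) r := by
  intro r hr
  have hc' := hc.mono Ioo_subset_Ioc_self
  have hr' : Ioo 0 a₀ ∈ 𝓝 r := isOpen_Ioo.mem_nhds hr
  have hw : DifferentiableAt ℝ w r := (hc'.contDiffAt hr').differentiableAt (by norm_num)
  have hw' : DifferentiableAt ℝ (deriv w) r :=
    ((hc'.deriv_of_isOpen isOpen_Ioo (m := 1) (by norm_num)).contDiffAt hr').differentiableAt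
      (by norm_num)
  rw [willmoreRHS, ← ode r hr]
  exact hw'.hasDerivAt.add (hw.fun_div differentiableAt_id hr.1.ne').hasDerivAt

lemma exists_contDiffOn_Icc_eq_sub_mul_log {lam a₀ L : ℝ} {w : ℝ → ℝ} (ha : 0 < a₀)
    (hc : ContDiffOn ℝ 2 w (Ioc 0 a₀)) (hw0 : Tendsto w (𝓝[>] 0) (𝓝 0))
    (hL : Tendsto (fun r => deriv w r - lam / 2 * log r) (𝓝[>] 0) (𝓝 L)) :
    ∃ g : ℝ → ℝ, ContDiffOn ℝ 1 g (Icc 0 a₀) ∧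
      ∀ r ∈ Ioc 0 a₀, g r = w r - lam / 2 * r * log r := by
  set f : ℝ → ℝ := fun r => w r - lam / 2 * r * log r
  refine ⟨Function.update f 0 0, contDiffOn_Icc_update_of_tendsto (L := L - lam / 2) ha ?_ ?_ ?_,
    fun r hr => Function.update_of_ne hr.1.ne' _ _⟩
  · exact (hc.of_le (by norm_num)).sub ((contDiffOn_const.mul contDiffOn_id).mul
      (contDiffOn_log.mono fun r hr => hr.1.ne'))
  · simpa [f, mul_assoc] using hw0.sub ((tendsto_const_nhds (x := lam / 2)).mul
      tendsto_mul_log_nhdsGT_zero)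
  · refine (hL.sub_const (lam / 2)).congr' ?_
    filter_upwards [Ioo_mem_nhdsGT ha] with r hr
    have hw : HasDerivAt w (deriv w r) r :=
      (((hc.mono Ioo_subset_Ioc_self).contDiffAt (isOpen_Ioo.mem_nhds hr)).differentiableAt
        (by norm_num)).hasDerivAt
    have hf : HasDerivAt f (deriv w r - lam / 2 * (log r + 1)) r := by
      simpa only [f, mul_assoc] using
        hw.fun_sub ((hasDerivAt_mul_log hr.1.ne').const_mul (lam / 2))
    rw [hf.deriv]
    ring

/-- Let `w ∈ C²((0,a₀])` solve
`w'' + (w/r)' = (5w/(2(1+w²)))(w')² + (w³/(2r²))(3+w²) + (λ/r)(1+w²)^{5/2}` with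
`lim_{r→0⁺} w(r) = 0`. Then `w(r) - (λ/2) r log r` extends to a C¹ function on
`[0,a₀]`; in particular `lim_{r→0⁺}(w'(r) - (λ/2)log r)` exists. -/
theorem stmt_17 (lam a₀ : ℝ) (ha : 0 < a₀) (w : ℝ → ℝ)
    (hc : ContDiffOn ℝ 2 w (Set.Ioc 0 a₀))
    (ode : ∀ r ∈ Set.Ioo 0 a₀,
      deriv (deriv w) r + deriv (fun t => w t / t) r
        = 5 * w r / (2 * (1 + (w r) ^ 2)) * (deriv w r) ^ 2
          + (w r) ^ 3 / (2 * r ^ 2) * (3 + (w r) ^ 2)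
          + (lam / r) * (Real.sqrt (1 + (w r) ^ 2)) ^ 5)
    (lim0 : Tendsto w (𝓝[>] 0) (𝓝 0)) :
    (∃ g : ℝ → ℝ, ContDiffOn ℝ 1 g (Set.Icc 0 a₀) ∧
      ∀ r ∈ Set.Ioc 0 a₀, g r = w r - lam / 2 * r * Real.log r) ∧
    ∃ L : ℝ, Tendsto (fun r => deriv w r - lam / 2 * Real.log r) (𝓝[>] 0) (𝓝 L) := by
  obtain ⟨b, hb, hbsub⟩ := mem_nhdsGT_iff_exists_Ioc_subset.1 <|
    (lim0.abs.eventually (ge_mem_nhds (show |(0 : ℝ)| < 1 / 10 by norm_num))).and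
      (Ioo_mem_nhdsGT ha)
  have hsub : Ioc 0 b ⊆ Ioo 0 a₀ := fun r hr => (hbsub hr).2
  have hc' := hc.mono Ioo_subset_Ioc_self
  have hw : ∀ r ∈ Ioo 0 a₀, HasDerivAt w (deriv w r) r := fun r hr =>
    ((hc'.contDiffAt (isOpen_Ioo.mem_nhds hr)).differentiableAt (by norm_num)).hasDerivAt
  have hw' : ContinuousOn (deriv w) (Ioo 0 a₀) :=
    hc'.continuousOn_deriv_of_isOpen isOpen_Ioo (by norm_num)
  have hv := hasDerivAt_deriv_add_div_of_ode hc ode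
  obtain ⟨A, hA⟩ := exists_tendsto_sub_log hb (fun r hr => hw r (hsub hr)) (hw'.mono hsub)
    (fun r hr => hv r (hsub hr)) (fun r hr => (hbsub hr).1) lim0
  have hq := tendsto_div_sub_log_of_tendsto hb (fun r hr => hw r (hsub (Ioo_subset_Ioc_self hr)))
    lim0 hA
  have hL : Tendsto (fun r => deriv w r - lam / 2 * log r) (𝓝[>] 0) (𝓝 (A / 2 + lam / 4)) := by
    convert hA.sub hq using 2 with r
    · ring
    · ring
  exact ⟨exists_contDiffOn_Icc_eq_sub_mul_log ha hc lim0 hL, _, hL⟩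
end

section
/- Let g ∈ C⁰([0,a]) be nonnegative with (r|w|)' ≤ ε|w| + Cr log(1/r) on (0,a) for a C¹ function w with w(0)=0 and 0 < ε < 1. Then |w(r)| ≤ (C/(2-ε))(r log(1/r) + r) for r ∈ (0,a). -/
/-!
With `F r = r |w r|` the hypothesis reads `F' ≤ (ε / r) F + C r log (1 / r)`, so the integrating
factor `r ^ (-ε)` gives `(r ^ (-ε) F)' ≤ C r ^ (1 - ε) log (1 / r)`. The right side is the
derivative of `C r ^ q (1 / q ^ 2 - log r / q)` with `q = 2 - ε`, and both functions tend to `0`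
at `0⁺` (the first because `w 0 = 0` and `ε < 1`), so the first is bounded by the second.
Dividing by `r ^ (1 - ε)` and using `1 / q ^ 2 ≤ 1 / q` gives the bound.
-/

open Real Set Filter Topology

theorem le_of_hasDerivAt_le_of_tendsto_nhdsGT {φ ψ φ' ψ' : ℝ → ℝ} {b a l : ℝ}
    (hφ : ∀ s ∈ Ioo b a, HasDerivAt φ (φ' s) s) (hψ : ∀ s ∈ Ioo b a, HasDerivAt ψ (ψ' s) s)
    (hle : ∀ s ∈ Ioo b a, φ' s ≤ ψ' s)
    (hφb : Tendsto φ (𝓝[>] b) (𝓝 l)) (hψb : Tendsto ψ (𝓝[>] b) (𝓝 l)) :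
    ∀ r ∈ Ioo b a, φ r ≤ ψ r := by
  have hderiv : ∀ s ∈ Ioo b a, HasDerivAt (ψ - φ) (ψ' s - φ' s) s :=
    fun s hs ↦ (hψ s hs).sub (hφ s hs)
  have hmono : MonotoneOn (ψ - φ) (Ioo b a) := by
    refine monotoneOn_of_hasDerivWithinAt_nonneg (f' := ψ' - φ') (convex_Ioo b a)
      (fun s hs ↦ (hderiv s hs).continuousAt.continuousWithinAt) (fun s hs ↦ ?_) (fun s hs ↦ ?_)
    · rw [interior_Ioo] at hs ⊢
      exact (hderiv s hs).hasDerivWithinAt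
    · rw [interior_Ioo] at hs
      exact sub_nonneg.2 (hle s hs)
  intro r hr
  have hlim : Tendsto (ψ - φ) (𝓝[>] b) (𝓝 0) := sub_self l ▸ hψb.sub hφb
  have hbelow : ∀ᶠ s in 𝓝[>] b, (ψ - φ) s ≤ (ψ - φ) r := by
    filter_upwards [Ioo_mem_nhdsGT hr.1] with s hs
    exact hmono ⟨hs.1, hs.2.trans hr.2⟩ hr hs.2.le
  exact sub_nonneg.1 (le_of_tendsto hlim hbelow)

theorem tendsto_rpow_nhdsGT_zero {q : ℝ} (hq : 0 < q) :
    Tendsto (fun t : ℝ ↦ t ^ q) (𝓝[>] 0) (𝓝 0) := by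
  simpa [zero_rpow hq.ne'] using
    ((continuousAt_rpow_const 0 q (Or.inr hq.le)).tendsto).mono_left nhdsWithin_le_nhds

theorem hasDerivAt_rpow_mul {F : ℝ → ℝ} {F' s : ℝ} (p : ℝ) (hs : 0 < s)
    (hF : HasDerivAt F F' s) :
    HasDerivAt (fun t ↦ t ^ p * F t) (s ^ p * (F' + p * F s / s)) s := by
  refine ((hasDerivAt_rpow_const (p := p) (Or.inl hs.ne')).mul hF).congr_deriv ?_
  rw [rpow_sub_one hs.ne']
  ring

theorem hasDerivAt_rpow_mul_sub_log {q s : ℝ} (hq : q ≠ 0) (hs : 0 < s) :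
    HasDerivAt (fun t ↦ t ^ q * (1 / q ^ 2 - log t / q)) (s ^ (q - 1) * log (1 / s)) s := by
  refine ((hasDerivAt_rpow_const (p := q) (Or.inl hs.ne')).mul
    (((hasDerivAt_log hs.ne').div_const q).const_sub (1 / q ^ 2))).congr_deriv ?_
  rw [rpow_sub_one hs.ne', one_div s, log_inv]
  field_simp
  ring

theorem tendsto_rpow_mul_sub_log_nhdsGT_zero {q : ℝ} (hq : 0 < q) :
    Tendsto (fun t ↦ t ^ q * (1 / q ^ 2 - log t / q)) (𝓝[>] 0) (𝓝 0) := by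
  have h := ((tendsto_rpow_nhdsGT_zero hq).const_mul (1 / q ^ 2)).sub
    ((tendsto_log_mul_rpow_nhdsGT_zero hq).div_const q)
  simp only [mul_zero, zero_div, sub_zero] at h
  exact h.congr fun t ↦ by ring

theorem tendsto_rpow_mul_mul_nhdsGT_zero {f : ℝ → ℝ} {p : ℝ} (hp : -1 < p)
    (hf : Tendsto f (𝓝[>] 0) (𝓝 0)) :
    Tendsto (fun t ↦ t ^ p * (t * f t)) (𝓝[>] 0) (𝓝 0) := by
  have h := (tendsto_rpow_nhdsGT_zero (q := p + 1) (by linarith)).mul hf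
  rw [mul_zero] at h
  refine h.congr' ?_
  filter_upwards [self_mem_nhdsWithin] with t (ht : 0 < t)
  rw [rpow_add_one ht.ne', mul_assoc]

theorem rpow_neg_mul_deriv_le_of_le {s ε y d C : ℝ} (hs : 0 < s)
    (hd : d ≤ ε * y + C * s * log (1 / s)) :
    s ^ (-ε) * (d + -ε * (s * y) / s) ≤ C * (s ^ (2 - ε - 1) * log (1 / s)) := by
  have hcancel : -ε * (s * y) / s = -ε * y := by field_simp [hs.ne']
  calc s ^ (-ε) * (d + -ε * (s * y) / s) ≤ s ^ (-ε) * (C * s * log (1 / s)) := by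
        rw [hcancel]
        exact mul_le_mul_of_nonneg_left (by linarith) (rpow_nonneg hs.le _)
    _ = C * (s ^ (2 - ε - 1) * log (1 / s)) := by
        rw [show 2 - ε - 1 = -ε + 1 by ring, rpow_add_one hs.ne']
        ring

theorem le_of_rpow_neg_mul_le {x r ε C : ℝ} (hr : 0 < r) (hε : ε < 1) (hC : 0 ≤ C)
    (h : r ^ (-ε) * (r * x) ≤ C * (r ^ (2 - ε) * (1 / (2 - ε) ^ 2 - log r / (2 - ε)))) :
    x ≤ C / (2 - ε) * (r * log (1 / r) + r) := by
  set q := 2 - ε with hq_def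
  have hq : 1 ≤ q := by linarith
  have hx : x ≤ C * r * (1 / q ^ 2 - log r / q) := by
    have hq_pow : r ^ q = r ^ (-ε) * r * r := by
      rw [hq_def, show 2 - ε = -ε + 1 + 1 by ring, rpow_add_one hr.ne', rpow_add_one hr.ne']
    refine le_of_mul_le_mul_left ?_ (by positivity : 0 < r ^ (-ε) * r)
    calc r ^ (-ε) * r * x = r ^ (-ε) * (r * x) := by ring
      _ ≤ C * (r ^ q * (1 / q ^ 2 - log r / q)) := h
      _ = r ^ (-ε) * r * (C * r * (1 / q ^ 2 - log r / q)) := by rw [hq_pow]; ring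
  calc x ≤ C * r * (1 / q ^ 2 - log r / q) := hx
    _ ≤ C * r * (1 / q - log r / q) := by
        gcongr
        nlinarith
    _ = C / q * (r * log (1 / r) + r) := by
        rw [one_div r, log_inv]
        ring

theorem stmt_18_general (a ε C : ℝ) (hε1 : ε < 1) (hC : 0 < C) (w : ℝ → ℝ)
    (hw : ContDiffOn ℝ 1 w (Set.Icc 0 a)) (hw0 : w 0 = 0)
    (hineq : ∃ d : ℝ → ℝ, ∀ r ∈ Set.Ioo 0 a,
      HasDerivAt (fun t => t * |w t|) (d r) r ∧
      d r ≤ ε * |w r| + C * r * Real.log (1 / r)) :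
    ∀ r ∈ Set.Ioo 0 a, |w r| ≤ C / (2 - ε) * (r * Real.log (1 / r) + r) := by
  obtain ⟨d, hd⟩ := hineq
  intro r hr
  have ha : 0 < a := hr.1.trans hr.2
  have hw_lim : Tendsto (fun t ↦ |w t|) (𝓝[>] 0) (𝓝 0) := by
    simpa [hw0] using ((hw.continuousOn 0 ⟨le_rfl, ha.le⟩).tendsto.mono_left
      (nhdsWithin_le_of_mem (Icc_mem_nhdsGT ha))).abs
  refine le_of_rpow_neg_mul_le hr.1 hε1 hC.le <|
    le_of_hasDerivAt_le_of_tendsto_nhdsGT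
      (fun s hs ↦ hasDerivAt_rpow_mul (-ε) hs.1 (hd s hs).1)
      (fun s hs ↦ (hasDerivAt_rpow_mul_sub_log (by linarith) hs.1).const_mul C)
      (fun s hs ↦ rpow_neg_mul_deriv_le_of_le hs.1 (hd s hs).2)
      (tendsto_rpow_mul_mul_nhdsGT_zero (by linarith) hw_lim) ?_ r hr
  simpa using (tendsto_rpow_mul_sub_log_nhdsGT_zero (q := 2 - ε) (by linarith)).const_mul C

/-- Let `w` be C¹ on `[0,a]` with `w(0) = 0`, `a < 1`, `0 < ε < 1`,
`C > 0`. If the differential inequality `(r|w|)' ≤ ε|w| + C r log(1/r)` holds on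
`(0,a)`, then `|w(r)| ≤ (C/(2-ε))(r log(1/r) + r)` for `r ∈ (0,a)`. -/
theorem stmt_18 (a ε C : ℝ) (ha0 : 0 < a) (ha1 : a < 1)
    (hε0 : 0 < ε) (hε1 : ε < 1) (hC : 0 < C) (w : ℝ → ℝ)
    (hw : ContDiffOn ℝ 1 w (Set.Icc 0 a)) (hw0 : w 0 = 0)
    (hineq : ∃ d : ℝ → ℝ, ∀ r ∈ Set.Ioo 0 a,
      HasDerivAt (fun t => t * |w t|) (d r) r ∧
      d r ≤ ε * |w r| + C * r * Real.log (1 / r)) :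
    ∀ r ∈ Set.Ioo 0 a, |w r| ≤ C / (2 - ε) * (r * Real.log (1 / r) + r) :=
  stmt_18_general a ε C hε1 hC w hw hw0 hineq
end

section
/- For the inverted catenoid: given λ, b ∈ ℝ with λ ≠ 0, set c = -λ/4 and a = (λ/4)log(|λ|/8) + 3λ/8 - b/2. The outermost graphical piece Σ_{c,a} of the image of the catenoid {(|c|cosh t cos θ, |c|cosh t sin θ, ct)} under the inversion I_a(x,y,z) = (x,y,z-a)/|(x,y,z-a)|² is the graph of a function U(r) satisfying U(r) = -c r² log r + (c log 2 - c log|c| - a) r² + o(r²) as r → 0⁺; in particular lim_{r→0⁺}(U''(r) - (λ/2)log r) = b. -/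
/-!
Parametrize the piece by `t`: it is the curve `t ↦ (radius t, height t)`. For large `t` the
numerator of `radius'` is negative, so `radius` maps `(t*, ∞)` decreasingly onto
`(0, radius t*)` and `U = height ∘ radius⁻¹`. Write `P = ct - a`; since `P = O(t)`, a factor
`1 + o(1/t)` multiplying `P` costs only `o(1)`. Now `height / radius² = P (1 + o(1/t))` and
`log radius = log 2 - log |c| - t + o(1)`, so in `U / r² + c log r` the terms `P` and `-ct`
cancel up to `-a`. Likewise `U''` at `radius t` is `2P (1 + o(1/t)) - 3c + o(1)`, and `2P`
cancels against `2c log r` up to `-2a`; the remaining constant is `b` for the prescribed `a`.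
-/

open Real Set Filter Topology Asymptotics Function

section OneAddLittleO

variable {α : Type*} {l : Filter α} {ε f g : α → ℝ}

theorem tendsto_one_of_sub_one_isLittleO (hε : Tendsto ε l (𝓝 0))
    (hf : (fun x => f x - 1) =o[l] ε) : Tendsto f l (𝓝 1) := by
  simpa using (hf.trans_tendsto hε).add_const 1

theorem sub_one_isLittleO_mul (hε : Tendsto ε l (𝓝 0)) (hf : (fun x => f x - 1) =o[l] ε)
    (hg : (fun x => g x - 1) =o[l] ε) : (fun x => f x * g x - 1) =o[l] ε := by
  have hfg : (fun x => (f x - 1) * g x) =o[l] ε := by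
    simpa using hf.mul_isBigO (Tendsto.isBigO_one ℝ (tendsto_one_of_sub_one_isLittleO hε hg))
  exact (hfg.add hg).congr_left fun x => by ring

theorem sub_one_isLittleO_pow (hε : Tendsto ε l (𝓝 0)) (hf : (fun x => f x - 1) =o[l] ε) :
    ∀ n : ℕ, (fun x => f x ^ n - 1) =o[l] ε
  | 0 => by simp
  | n + 1 => by
    simpa only [pow_succ] using sub_one_isLittleO_mul hε (sub_one_isLittleO_pow hε hf n) hf

theorem sub_one_isLittleO_inv (hε : Tendsto ε l (𝓝 0)) (hf : (fun x => f x - 1) =o[l] ε) :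
    (fun x => (f x)⁻¹ - 1) =o[l] ε := by
  have hinv : Tendsto (fun x => (f x)⁻¹) l (𝓝 1) := by
    simpa using (tendsto_one_of_sub_one_isLittleO hε hf).inv₀ one_ne_zero
  have h : (fun x => -((f x - 1) * (f x)⁻¹)) =o[l] ε := by
    simpa using (hf.mul_isBigO (Tendsto.isBigO_one ℝ hinv)).neg_left
  refine h.congr' ?_ EventuallyEq.rfl
  filter_upwards [(tendsto_one_of_sub_one_isLittleO hε hf).eventually_ne one_ne_zero] with x hx
  field_simp
  ring

end OneAddLittleO

theorem isLittleO_inv_atTop_iff {f : ℝ → ℝ} :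
    f =o[atTop] (fun t => t⁻¹) ↔ Tendsto (fun t => t * f t) atTop (𝓝 0) := by
  rw [isLittleO_iff_tendsto'
    ((eventually_ne_atTop 0).mono fun t ht h0 => absurd (inv_eq_zero.1 h0) ht)]
  simp only [div_inv_eq_mul, mul_comm]

theorem tendsto_mul_sub_one_of_isLittleO_inv {f : ℝ → ℝ} (c a : ℝ)
    (hf : (fun t => f t - 1) =o[atTop] fun t => t⁻¹) :
    Tendsto (fun t => (c * t - a) * (f t - 1)) atTop (𝓝 0) := by
  have h := ((isLittleO_inv_atTop_iff.1 hf).const_mul c).sub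
    ((hf.trans_tendsto tendsto_inv_atTop_zero).const_mul a)
  simp only [mul_zero, sub_zero] at h
  exact h.congr fun t => by ring

theorem tendsto_sinh_atTop : Tendsto sinh atTop atTop := by
  have h : Tendsto (fun t => exp t - exp (-t)) atTop atTop :=
    tendsto_exp_atTop.atTop_add ((tendsto_exp_atBot.comp tendsto_neg_atTop_atBot).neg)
  simpa only [← sinh_eq] using h.atTop_div_const two_pos

theorem tendsto_cosh_atTop : Tendsto cosh atTop atTop :=
  tendsto_atTop_mono (fun t => (sinh_lt_cosh (x := t)).le) tendsto_sinh_atTop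

theorem tendsto_pow_div_cosh_atTop (k : ℕ) :
    Tendsto (fun t => t ^ k / cosh t) atTop (𝓝 0) := by
  have h := (tendsto_pow_mul_exp_neg_atTop_nhds_zero k).const_mul 2
  rw [mul_zero] at h
  refine squeeze_zero' ?_ ?_ h
  · filter_upwards [eventually_ge_atTop 0] with t ht
    have := cosh_pos t
    positivity
  · filter_upwards [eventually_ge_atTop 0] with t ht
    have hcosh : exp t / 2 ≤ cosh t := by rw [cosh_eq]; linarith [exp_pos (-t)]
    calc t ^ k / cosh t ≤ t ^ k / (exp t / 2) :=
          div_le_div_of_nonneg_left (by positivity) (by positivity) hcosh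
      _ = 2 * (t ^ k * exp (-t)) := by rw [exp_neg]; field_simp

theorem cosh_div_sinh_sub_one_isLittleO :
    (fun t => cosh t / sinh t - 1) =o[atTop] fun t => t⁻¹ := by
  have h : Tendsto (fun t => (t * exp (-t)) * (sinh t)⁻¹) atTop (𝓝 0) := by
    simpa using (tendsto_pow_mul_exp_neg_atTop_nhds_zero 1).mul
      tendsto_sinh_atTop.inv_tendsto_atTop
  refine isLittleO_inv_atTop_iff.2 (h.congr' ?_)
  filter_upwards [tendsto_sinh_atTop.eventually_gt_atTop 0] with t ht
  rw [← cosh_sub_sinh]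
  field_simp

theorem tendsto_log_cosh_sub_atTop :
    Tendsto (fun t => log (cosh t) - t) atTop (𝓝 (-log 2)) := by
  have h : Tendsto (fun t => (1 + exp (-2 * t)) / 2) atTop (𝓝 2⁻¹) := by
    simpa using ((tendsto_exp_atBot.comp
      (tendsto_id.const_mul_atTop_of_neg (by norm_num : (-2 : ℝ) < 0))).const_add 1).div_const 2
  have hlog := (continuousAt_log (by norm_num)).tendsto.comp h
  rw [log_inv] at hlog
  refine hlog.congr fun t => ?_
  have hcosh : cosh t = exp t * ((1 + exp (-2 * t)) / 2) := by
    rw [cosh_eq, mul_div_assoc', mul_add, mul_one, ← exp_add]; ring_nf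
  rw [Function.comp_apply, hcosh, log_mul (exp_pos t).ne' (by positivity), log_exp]
  ring

theorem tendsto_pow_mul_affine_div_cosh (c a : ℝ) (k : ℕ) :
    Tendsto (fun t => t ^ k * (c * t - a) / cosh t) atTop (𝓝 0) := by
  have h := ((tendsto_pow_div_cosh_atTop (k + 1)).const_mul c).sub
    ((tendsto_pow_div_cosh_atTop k).const_mul a)
  simp only [mul_zero, sub_zero] at h
  exact h.congr fun t => by ring

section InverseOfStrictAnti

variable {h : ℝ → ℝ} {T₀ : ℝ}

theorem bijOn_Ioi_Ioo_of_strictAntiOn (hpos : ∀ t, 0 < h t) (hanti : StrictAntiOn h (Ici T₀))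
    (hcont : ContinuousOn h (Ici T₀)) (hlim : Tendsto h atTop (𝓝 0)) :
    BijOn h (Ioi T₀) (Ioo 0 (h T₀)) := by
  refine ⟨fun t ht => ⟨hpos t, hanti self_mem_Ici ht.out.le ht⟩,
    hanti.injOn.mono Ioi_subset_Ici_self, fun r hr => ?_⟩
  obtain ⟨t₁, hlt, ht₁⟩ :=
    ((hlim.eventually_lt_const hr.1).and (eventually_gt_atTop T₀)).exists
  obtain ⟨t, ht, rfl⟩ :=
    intermediate_value_Ioo' ht₁.le (hcont.mono Icc_subset_Ici_self) ⟨hlt, hr.2⟩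
  exact ⟨t, ht.1, rfl⟩

theorem continuousOn_invFunOn_of_strictAntiOn (hanti : StrictAntiOn h (Ici T₀))
    (hbij : BijOn h (Ioi T₀) (Ioo 0 (h T₀))) :
    ContinuousOn (invFunOn h (Ioi T₀)) (Ioo 0 (h T₀)) := by
  set T := invFunOn h (Ioi T₀)
  have hinv := hbij.invOn_invFunOn
  have hmaps : MapsTo T (Ioo 0 (h T₀)) (Ioi T₀) := hbij.surjOn.mapsTo_invFunOn
  have hmono : MonotoneOn (fun r => -T r) (Ioo 0 (h T₀)) := by
    intro r₁ hr₁ r₂ hr₂ hle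
    by_contra! hlt
    have := hanti (hmaps hr₁).out.le (hmaps hr₂).out.le (neg_lt_neg_iff.1 hlt)
    rw [hinv.2 hr₁, hinv.2 hr₂] at this
    exact this.not_ge hle
  have himage : (fun r => -T r) '' Ioo 0 (h T₀) = Iio (-T₀) := by
    rw [← image_neg_Ioi, ← (hinv.symm.bijOn hmaps hbij.mapsTo).image_eq, image_image]
  intro r hr
  have hneg := continuousAt_of_monotoneOn_of_image_mem_nhds hmono (isOpen_Ioo.mem_nhds hr)
    (by rw [himage]; exact Iio_mem_nhds (neg_lt_neg (hmaps hr)))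
  have hT : ContinuousAt (fun r => -(-T r)) r := hneg.neg
  simp only [neg_neg] at hT
  exact hT.continuousWithinAt

theorem tendsto_invFunOn_of_strictAntiOn (hanti : StrictAntiOn h (Ici T₀))
    (hbij : BijOn h (Ioi T₀) (Ioo 0 (h T₀))) :
    Tendsto (invFunOn h (Ioi T₀)) (𝓝[>] 0) atTop := by
  rw [tendsto_atTop]
  intro M
  have hs : T₀ < max M T₀ + 1 := by linarith [le_max_right M T₀]
  filter_upwards [Ioo_mem_nhdsGT (hbij.mapsTo hs).1] with r hr
  have hr₀ : r ∈ Ioo 0 (h T₀) := ⟨hr.1, hr.2.trans (hbij.mapsTo hs).2⟩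
  have hTr := hbij.surjOn.mapsTo_invFunOn hr₀
  by_contra! hlt
  have := hanti.antitoneOn hTr.out.le hs.le (by linarith [le_max_left M T₀])
  rw [hbij.invOn_invFunOn.2 hr₀] at this
  exact this.not_gt hr.2

theorem hasDerivAt_comp_invFunOn (hanti : StrictAntiOn h (Ici T₀))
    (hbij : BijOn h (Ioi T₀) (Ioo 0 (h T₀))) {h' : ℝ → ℝ}
    (hh : ∀ t > T₀, HasDerivAt h (h' t) t) (hh' : ∀ t > T₀, h' t ≠ 0)
    {F : ℝ → ℝ} {r F' : ℝ} (hr : r ∈ Ioo 0 (h T₀))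
    (hF : HasDerivAt F F' (invFunOn h (Ioi T₀) r)) :
    HasDerivAt (F ∘ invFunOn h (Ioi T₀)) (F' / h' (invFunOn h (Ioi T₀) r)) r := by
  have hTr := hbij.surjOn.mapsTo_invFunOn hr
  have hT := HasDerivAt.of_local_left_inverse
    ((continuousOn_invFunOn_of_strictAntiOn hanti hbij).continuousAt (isOpen_Ioo.mem_nhds hr))
    (hh _ hTr) (hh' _ hTr)
    (Filter.mem_of_superset (isOpen_Ioo.mem_nhds hr) fun y hy => hbij.invOn_invFunOn.2 hy)
  exact (hF.comp r hT).congr_deriv (div_eq_mul_inv _ _).symm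

theorem deriv_deriv_comp_invFunOn (hanti : StrictAntiOn h (Ici T₀))
    (hbij : BijOn h (Ioi T₀) (Ioo 0 (h T₀))) {h' V V' W W' : ℝ → ℝ}
    (hh : ∀ t > T₀, HasDerivAt h (h' t) t) (hh' : ∀ t > T₀, h' t ≠ 0)
    (hV : ∀ t > T₀, HasDerivAt V (V' t) t) (hW : ∀ t > T₀, HasDerivAt W (W' t) t)
    (hVW : ∀ t > T₀, W t = V' t / h' t) {r : ℝ} (hr : r ∈ Ioo 0 (h T₀)) :
    deriv (deriv (V ∘ invFunOn h (Ioi T₀))) r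
      = W' (invFunOn h (Ioi T₀) r) / h' (invFunOn h (Ioi T₀) r) := by
  have hmaps := hbij.surjOn.mapsTo_invFunOn
  have hderiv : deriv (V ∘ invFunOn h (Ioi T₀)) =ᶠ[𝓝 r] W ∘ invFunOn h (Ioi T₀) := by
    filter_upwards [isOpen_Ioo.mem_nhds hr] with y hy
    rw [(hasDerivAt_comp_invFunOn hanti hbij hh hh' hy (hV _ (hmaps hy))).deriv,
      Function.comp_apply, hVW _ (hmaps hy)]
  rw [hderiv.deriv_eq]
  exact (hasDerivAt_comp_invFunOn hanti hbij hh hh' hr (hW _ (hmaps hr))).deriv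

end InverseOfStrictAnti

namespace InvertedCatenoid

variable (c a : ℝ)

noncomputable def sqDist (t : ℝ) : ℝ := c ^ 2 * cosh t ^ 2 + (c * t - a) ^ 2

noncomputable def radius (t : ℝ) : ℝ := |c| * cosh t / sqDist c a t

noncomputable def height (t : ℝ) : ℝ := (c * t - a) / sqDist c a t

noncomputable def radiusDerivNum (t : ℝ) : ℝ :=
  sinh t * (c * t - a) ^ 2 - c ^ 2 * cosh t ^ 2 * sinh t - 2 * c * cosh t * (c * t - a)

noncomputable def heightDerivNum (t : ℝ) : ℝ :=
  c ^ 3 * cosh t ^ 2 - c * (c * t - a) ^ 2 - 2 * c ^ 2 * cosh t * sinh t * (c * t - a)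

-- `firstDeriv t` and `secondDeriv t` are `U'` and `U''` at `r = radius t`.
noncomputable def firstDeriv (t : ℝ) : ℝ := heightDerivNum c a t / (|c| * radiusDerivNum c a t)

noncomputable def firstDerivDerivNum (t : ℝ) : ℝ :=
  3 * c ^ 2 * cosh t ^ 2 - 2 * c * cosh t * sinh t * (c * t - a) + (c * t - a) ^ 2

noncomputable def secondDeriv (t : ℝ) : ℝ :=
  cosh t * sqDist c a t ^ 3 * firstDerivDerivNum c a t / (c * radiusDerivNum c a t ^ 3)

variable {c a}

theorem sqDist_pos (hc : c ≠ 0) (t : ℝ) : 0 < sqDist c a t := by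
  have := cosh_pos t
  unfold sqDist
  positivity

theorem radius_pos (hc : c ≠ 0) (t : ℝ) : 0 < radius c a t := by
  have := cosh_pos t
  have := sqDist_pos (a := a) hc t
  unfold radius
  positivity

theorem hasDerivAt_affine (t : ℝ) : HasDerivAt (fun t => c * t - a) c t := by
  simpa using ((hasDerivAt_id t).const_mul c).sub_const a

theorem hasDerivAt_sqDist (t : ℝ) :
    HasDerivAt (sqDist c a) (2 * c ^ 2 * cosh t * sinh t + 2 * c * (c * t - a)) t :=
  ((((hasDerivAt_cosh t).pow 2).const_mul (c ^ 2)).add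
    ((hasDerivAt_affine t).pow 2)).congr_deriv (by push_cast; ring)

theorem hasDerivAt_radius (hc : c ≠ 0) (t : ℝ) :
    HasDerivAt (radius c a) (|c| * radiusDerivNum c a t / sqDist c a t ^ 2) t :=
  (((hasDerivAt_cosh t).const_mul |c|).div (hasDerivAt_sqDist t)
    (sqDist_pos hc t).ne').congr_deriv (by unfold radiusDerivNum sqDist; ring)

theorem hasDerivAt_height (hc : c ≠ 0) (t : ℝ) :
    HasDerivAt (height c a) (heightDerivNum c a t / sqDist c a t ^ 2) t :=
  ((hasDerivAt_affine t).div (hasDerivAt_sqDist t) (sqDist_pos hc t).ne').congr_deriv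
    (by unfold heightDerivNum sqDist; ring)

theorem hasDerivAt_radiusDerivNum (t : ℝ) :
    HasDerivAt (radiusDerivNum c a) (cosh t * ((c * t - a) ^ 2 - 3 * c ^ 2 * cosh t ^ 2)) t :=
  (((hasDerivAt_sinh t).mul ((hasDerivAt_affine t).pow 2)).sub
      ((((hasDerivAt_cosh t).pow 2).const_mul (c ^ 2)).mul (hasDerivAt_sinh t))
    |>.sub (((hasDerivAt_cosh t).const_mul (2 * c)).mul (hasDerivAt_affine t))).congr_deriv (by
    simp only [Pi.pow_apply]
    push_cast
    linear_combination (2 * c ^ 2 * cosh t) * cosh_sq_sub_sinh_sq t)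

theorem hasDerivAt_heightDerivNum (t : ℝ) :
    HasDerivAt (heightDerivNum c a) (-4 * c ^ 2 * (c * t - a) * cosh t ^ 2) t :=
  ((((hasDerivAt_cosh t).pow 2).const_mul (c ^ 3)).sub
      (((hasDerivAt_affine t).pow 2).const_mul c)
    |>.sub ((((hasDerivAt_cosh t).const_mul (2 * c ^ 2)).mul (hasDerivAt_sinh t)).mul
      (hasDerivAt_affine t))).congr_deriv (by
    simp only [Pi.mul_apply]
    push_cast
    linear_combination (2 * c ^ 2 * (c * t - a)) * cosh_sq_sub_sinh_sq t)

theorem hasDerivAt_firstDeriv (hc : c ≠ 0) {t : ℝ} (hN : radiusDerivNum c a t ≠ 0) :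
    HasDerivAt (firstDeriv c a)
      (c * cosh t * sqDist c a t * firstDerivDerivNum c a t / (|c| * radiusDerivNum c a t ^ 2))
      t := by
  refine (hasDerivAt_heightDerivNum t).div ((hasDerivAt_radiusDerivNum t).const_mul |c|)
    (mul_ne_zero (abs_ne_zero.mpr hc) hN) |>.congr_deriv ?_
  field_simp
  unfold radiusDerivNum heightDerivNum sqDist firstDerivDerivNum
  ring

variable (c a) in
noncomputable def sqDistRatio (t : ℝ) : ℝ := sqDist c a t / (c ^ 2 * cosh t ^ 2)

variable (c a) in
noncomputable def radiusDerivRatio (t : ℝ) : ℝ :=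
  -radiusDerivNum c a t / (c ^ 2 * cosh t ^ 2 * sinh t)

theorem sqDistRatio_sub_one_isLittleO (hc : c ≠ 0) :
    (fun t => sqDistRatio c a t - 1) =o[atTop] fun t => t⁻¹ := by
  have h := ((tendsto_pow_mul_affine_div_cosh c a 1).mul
    (tendsto_pow_mul_affine_div_cosh c a 0)).div_const (c ^ 2)
  simp only [mul_zero, zero_div] at h
  refine isLittleO_inv_atTop_iff.2 (h.congr fun t => ?_)
  have := (cosh_pos t).ne'
  unfold sqDistRatio sqDist
  field_simp
  ring

theorem radiusDerivRatio_sub_one_isLittleO (hc : c ≠ 0) :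
    (fun t => radiusDerivRatio c a t - 1) =o[atTop] fun t => t⁻¹ := by
  have hA := isLittleO_inv_atTop_iff.1 (sqDistRatio_sub_one_isLittleO (a := a) hc)
  have h := hA.neg.add (((tendsto_pow_mul_affine_div_cosh c a 1).mul
    tendsto_sinh_atTop.inv_tendsto_atTop).const_mul (2 / c))
  simp only [neg_zero, mul_zero, add_zero] at h
  refine isLittleO_inv_atTop_iff.2 (h.congr' ?_)
  filter_upwards [tendsto_sinh_atTop.eventually_gt_atTop 0] with t hS
  have := (cosh_pos t).ne'
  simp only [Pi.inv_apply]
  unfold sqDistRatio radiusDerivRatio sqDist radiusDerivNum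
  field_simp
  ring

theorem eventually_radiusDerivNum_neg (hc : c ≠ 0) :
    ∀ᶠ t in atTop, radiusDerivNum c a t < 0 := by
  filter_upwards [Tendsto.eventually_const_lt one_pos (tendsto_one_of_sub_one_isLittleO
      tendsto_inv_atTop_zero (radiusDerivRatio_sub_one_isLittleO (a := a) hc)),
    tendsto_sinh_atTop.eventually_gt_atTop 0] with t hB hS
  have hden : 0 < c ^ 2 * cosh t ^ 2 * sinh t := by have := cosh_pos t; positivity
  rw [radiusDerivRatio, lt_div_iff₀ hden] at hB
  linarith

theorem strictAntiOn_radius (hc : c ≠ 0) {T₀ : ℝ}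
    (hN : ∀ t ≥ T₀, radiusDerivNum c a t < 0) : StrictAntiOn (radius c a) (Ici T₀) := by
  refine strictAntiOn_of_hasDerivWithinAt_neg (convex_Ici T₀)
    (fun t _ => (hasDerivAt_radius hc t).continuousAt.continuousWithinAt)
    (fun t _ => (hasDerivAt_radius hc t).hasDerivWithinAt) fun t ht => ?_
  rw [interior_Ici] at ht
  have := sqDist_pos (a := a) hc t
  exact div_neg_of_neg_of_pos (mul_neg_of_pos_of_neg (abs_pos.2 hc) (hN t ht.out.le))
    (by positivity)

theorem radius_eq (hc : c ≠ 0) (t : ℝ) :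
    radius c a t = (|c| * cosh t)⁻¹ * (sqDistRatio c a t)⁻¹ := by
  have := (cosh_pos t).ne'
  have := (sqDist_pos (a := a) hc t).ne'
  rw [radius, sqDistRatio, ← sq_abs c]
  field_simp

theorem tendsto_radius_atTop (hc : c ≠ 0) : Tendsto (radius c a) atTop (𝓝 0) := by
  have hA := (tendsto_one_of_sub_one_isLittleO tendsto_inv_atTop_zero
    (sqDistRatio_sub_one_isLittleO (a := a) hc)).inv₀ one_ne_zero
  have h := (tendsto_cosh_atTop.const_mul_atTop (abs_pos.2 hc)).inv_tendsto_atTop.mul hA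
  rw [zero_mul] at h
  exact h.congr fun t => (radius_eq hc t).symm

theorem tendsto_log_radius_add (hc : c ≠ 0) :
    Tendsto (fun t => log (radius c a t) + t) atTop (𝓝 (log 2 - log |c|)) := by
  have hA := (continuousAt_log one_ne_zero).tendsto.comp (tendsto_one_of_sub_one_isLittleO
    tendsto_inv_atTop_zero (sqDistRatio_sub_one_isLittleO (a := a) hc))
  have h := (tendsto_log_cosh_sub_atTop.add hA).neg.sub_const (log |c|)
  rw [log_one, add_zero, neg_neg] at h
  refine h.congr' ?_
  filter_upwards [eventually_gt_atTop 0] with t ht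
  have hA0 : 0 < sqDistRatio c a t := by
    have := cosh_pos t; have := sqDist_pos (a := a) hc t
    unfold sqDistRatio; positivity
  rw [radius_eq hc, log_mul (by have := cosh_pos t; positivity) (inv_pos.2 hA0).ne', log_inv,
    log_inv, log_mul (abs_pos.2 hc).ne' (cosh_pos t).ne', Function.comp_apply]
  ring

theorem tendsto_height_div_radius_sq_sub (hc : c ≠ 0) :
    Tendsto (fun t => height c a t / radius c a t ^ 2 - (c * t - a)) atTop (𝓝 0) := by
  refine (tendsto_mul_sub_one_of_isLittleO_inv c a
    (sqDistRatio_sub_one_isLittleO (a := a) hc)).congr fun t => ?_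
  have := (cosh_pos t).ne'
  have := (sqDist_pos (a := a) hc t).ne'
  rw [height, radius, sqDistRatio, div_pow, mul_pow, sq_abs]
  field_simp

-- Each ratio here is `1 + o(1/t)`, so the factor multiplying `2 (c t - a)` is too.
theorem secondDeriv_eq_ratios (hc : c ≠ 0) {t : ℝ} (hS : sinh t ≠ 0)
    (hN : radiusDerivNum c a t ≠ 0) :
    secondDeriv c a t = (2 * (c * t - a) - c * (cosh t / sinh t) * (2 + sqDistRatio c a t)) *
      ((cosh t / sinh t) ^ 2 * sqDistRatio c a t ^ 3 * (radiusDerivRatio c a t)⁻¹ ^ 3) := by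
  have := (cosh_pos t).ne'
  have hG : firstDerivDerivNum c a t
      = c ^ 2 * cosh t ^ 2 * (2 + sqDistRatio c a t) - 2 * c * cosh t * sinh t * (c * t - a) := by
    unfold firstDerivDerivNum sqDistRatio sqDist
    field_simp
    ring
  rw [secondDeriv, hG, sqDistRatio, radiusDerivRatio]
  field_simp
  ring

theorem tendsto_secondDeriv_sub (hc : c ≠ 0) :
    Tendsto (fun t => secondDeriv c a t - 2 * (c * t - a)) atTop (𝓝 (-3 * c)) := by
  have hε := tendsto_inv_atTop_zero (𝕜 := ℝ)
  have hr := cosh_div_sinh_sub_one_isLittleO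
  have hA := sqDistRatio_sub_one_isLittleO (a := a) hc
  have hF := sub_one_isLittleO_mul hε (sub_one_isLittleO_mul hε
    (sub_one_isLittleO_pow hε hr 2) (sub_one_isLittleO_pow hε hA 3))
    (sub_one_isLittleO_pow hε (sub_one_isLittleO_inv hε
      (radiusDerivRatio_sub_one_isLittleO (a := a) hc)) 3)
  have h := ((tendsto_mul_sub_one_of_isLittleO_inv c a hF).const_mul 2).sub
    ((((tendsto_one_of_sub_one_isLittleO hε hr).const_mul c).mul
      ((tendsto_one_of_sub_one_isLittleO hε hA).const_add 2)).mul
      (tendsto_one_of_sub_one_isLittleO hε hF))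
  rw [show 2 * (0 : ℝ) - c * 1 * (2 + 1) * 1 = -3 * c by ring] at h
  refine h.congr' ?_
  filter_upwards [tendsto_sinh_atTop.eventually_gt_atTop 0, eventually_radiusDerivNum_neg hc]
    with t hS hN
  rw [secondDeriv_eq_ratios hc hS.ne' hN.ne]
  ring

theorem tendsto_height_expansion_remainder (hc : c ≠ 0) :
    Tendsto (fun t => (height c a t - (-c * radius c a t ^ 2 * log (radius c a t)
        + (c * log 2 - c * log |c| - a) * radius c a t ^ 2)) / radius c a t ^ 2)
      atTop (𝓝 0) := by
  have h := (tendsto_height_div_radius_sq_sub (a := a) hc).add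
    ((tendsto_log_radius_add (a := a) hc).const_mul c)
  rw [zero_add] at h
  have h' := h.sub_const (c * (log 2 - log |c|))
  rw [sub_self] at h'
  refine h'.congr fun t => ?_
  have := (radius_pos (a := a) hc t).ne'
  field_simp
  ring

theorem tendsto_secondDeriv_add_log (hc : c ≠ 0) :
    Tendsto (fun t => secondDeriv c a t + 2 * c * log (radius c a t)) atTop
      (𝓝 (2 * c * (log 2 - log |c|) - 3 * c - 2 * a)) := by
  have h := ((tendsto_secondDeriv_sub (a := a) hc).add
    ((tendsto_log_radius_add (a := a) hc).const_mul (2 * c))).sub_const (2 * a)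
  rw [show 2 * c * (log 2 - log |c|) - 3 * c - 2 * a
    = -3 * c + 2 * c * (log 2 - log |c|) - 2 * a by ring]
  exact h.congr fun t => by ring

theorem firstDeriv_eq_div (hc : c ≠ 0) (t : ℝ) :
    firstDeriv c a t = heightDerivNum c a t / sqDist c a t ^ 2
      / (|c| * radiusDerivNum c a t / sqDist c a t ^ 2) := by
  rw [firstDeriv, div_div_div_cancel_right₀ (pow_ne_zero 2 (sqDist_pos hc t).ne')]

theorem secondDeriv_eq_div (hc : c ≠ 0) {t : ℝ} (hN : radiusDerivNum c a t ≠ 0) :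
    secondDeriv c a t
      = c * cosh t * sqDist c a t * firstDerivDerivNum c a t / (|c| * radiusDerivNum c a t ^ 2)
        / (|c| * radiusDerivNum c a t / sqDist c a t ^ 2) := by
  have := (sqDist_pos (a := a) hc t).ne'
  have := abs_ne_zero.2 hc
  rw [secondDeriv]
  field_simp
  rw [sq_abs]

theorem exists_graph_expansion (hc : c ≠ 0) :
    ∃ tStar : ℝ, ∃ U : ℝ → ℝ,
      StrictAntiOn (radius c a) (Ici tStar) ∧
      (∀ t ∈ Ioi tStar, U (radius c a t) = height c a t) ∧
      Tendsto (fun r => (U r - (-c * r ^ 2 * log r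
        + (c * log 2 - c * log |c| - a) * r ^ 2)) / r ^ 2) (𝓝[>] 0) (𝓝 0) ∧
      Tendsto (fun r => deriv (deriv U) r + 2 * c * log r) (𝓝[>] 0)
        (𝓝 (2 * c * (log 2 - log |c|) - 3 * c - 2 * a)) := by
  obtain ⟨T₀, hN⟩ := eventually_atTop.1 (eventually_radiusDerivNum_neg (a := a) hc)
  have hanti := strictAntiOn_radius hc hN
  have hbij := bijOn_Ioi_Ioo_of_strictAntiOn (radius_pos hc) hanti
    (fun t _ => (hasDerivAt_radius hc t).continuousAt.continuousWithinAt) (tendsto_radius_atTop hc)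
  have hT := tendsto_invFunOn_of_strictAntiOn hanti hbij
  have hs : Ioo 0 (radius c a T₀) ∈ 𝓝[>] 0 := Ioo_mem_nhdsGT (radius_pos hc T₀)
  refine ⟨T₀, height c a ∘ invFunOn (radius c a) (Ioi T₀), hanti,
    fun t ht => congrArg (height c a) (hbij.invOn_invFunOn.1 ht), ?_, ?_⟩
  · refine ((tendsto_height_expansion_remainder (a := a) hc).comp hT).congr' ?_
    filter_upwards [hs] with r hr
    simp only [Function.comp_apply, hbij.invOn_invFunOn.2 hr]
  · refine ((tendsto_secondDeriv_add_log (a := a) hc).comp hT).congr' ?_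
    filter_upwards [hs] with r hr
    have hTr := hbij.surjOn.mapsTo_invFunOn hr
    rw [deriv_deriv_comp_invFunOn hanti hbij (fun t _ => hasDerivAt_radius hc t)
      (fun t ht => div_ne_zero (mul_ne_zero (abs_ne_zero.2 hc) (hN t ht.le).ne)
        (pow_ne_zero 2 (sqDist_pos hc t).ne'))
      (fun t _ => hasDerivAt_height hc t) (fun t ht => hasDerivAt_firstDeriv hc (hN t ht.le).ne)
      (fun t _ => firstDeriv_eq_div hc t) hr,
      ← secondDeriv_eq_div hc (hN _ hTr.out.le).ne, Function.comp_apply,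
      hbij.invOn_invFunOn.2 hr]

end InvertedCatenoid

/-- Inverted catenoid. Given `λ ≠ 0` and `b`, set `c = -λ/4` and
`a = (λ/4)log(|λ|/8) + 3λ/8 - b/2`. The outermost graphical piece `Σ_{c,a}` of the
image of the catenoid `ℱ_c(t,θ) = (|c|cosh t cos θ, |c|cosh t sin θ, ct)` under the
inversion `I_a(x,y,z) = (x,y,z-a)/|(x,y,z-a)|²` — i.e. the piece swept out for `t`
beyond the last critical point `t*` of the radius function
`h(t) = |c|cosh t / (c²cosh²t + (ct-a)²)`, on which `h` is strictly decreasing — is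
the graph of a function `U(r)` satisfying
`U(r) = -c r² log r + (c log 2 - c log|c| - a) r² + o(r²)` as `r → 0⁺`; in particular
`lim_{r→0⁺}(U''(r) - (λ/2)log r) = b`. -/
theorem stmt_19 (lam b : ℝ) (hlam : lam ≠ 0) (c a : ℝ)
    (hc : c = -lam / 4)
    (ha : a = lam / 4 * Real.log (|lam| / 8) + 3 * lam / 8 - b / 2) :
    ∃ tStar : ℝ, ∃ U : ℝ → ℝ,
      StrictAntiOn (fun t => |c| * Real.cosh t /
        (c ^ 2 * (Real.cosh t) ^ 2 + (c * t - a) ^ 2)) (Set.Ici tStar) ∧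
      (∀ t ∈ Set.Ioi tStar,
        U (|c| * Real.cosh t / (c ^ 2 * (Real.cosh t) ^ 2 + (c * t - a) ^ 2))
          = (c * t - a) / (c ^ 2 * (Real.cosh t) ^ 2 + (c * t - a) ^ 2)) ∧
      Tendsto (fun r =>
          (U r - (-c * r ^ 2 * Real.log r
            + (c * Real.log 2 - c * Real.log |c| - a) * r ^ 2)) / r ^ 2)
        (𝓝[>] 0) (𝓝 0) ∧
      Tendsto (fun r => deriv (deriv U) r - lam / 2 * Real.log r) (𝓝[>] 0) (𝓝 b) := by
  have hc₀ : c ≠ 0 := by rw [hc]; exact div_ne_zero (neg_ne_zero.2 hlam) four_ne_zero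
  obtain ⟨tStar, U, hanti, hgraph, hU, hU''⟩ :=
    InvertedCatenoid.exists_graph_expansion (a := a) hc₀
  refine ⟨tStar, U, hanti, hgraph, hU, ?_⟩
  have hb : 2 * c * (log 2 - log |c|) - 3 * c - 2 * a = b := by
    have hlog (k : ℕ) : log (|lam| / 2 ^ k) = log |lam| - k * log 2 := by
      rw [log_div (abs_ne_zero.2 hlam) (by positivity), log_pow]
    rw [hc, ha, abs_div, abs_neg, show (4 : ℝ) = 2 ^ 2 by norm_num, abs_pow, abs_two, hlog,
      show (8 : ℝ) = 2 ^ 3 by norm_num, hlog]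
    push_cast
    ring
  rw [← hb]
  exact hU''.congr fun r => by rw [hc]; ring
end
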